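/- arXiv:2204.13896 — 5 statements merged into one kernel-verified Lean document; each statement's English description precedes it below -/
import Mathlib

section
/- Let X be a stationary, irreducible, aperiodic Markov chain on a finite state space 𝒳 with transition matrix P, let g : 𝒳 → 𝒴 and Y_t = g(X_t). For a sequence y_1^T ∈ 𝒴^T define the set of realizable preimages R(y_1^T) = { x_1^T ∈ 𝒳^T : p_{X_1^T}(x_1^T) > 0 and g(x_t) = y_t for all t ∈ [T] }. Then the conditional entropy rate lim_{T→∞} (1/T) H(X_1^T | Y_1^T) equals 0 if and only if there exists a constant C < ∞ such that for every T, |R(Y_1^T)| ≤ C almost surely. -/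
open Classical

/-- Finite-dimensional distributions of the Markov chain with initial distribution `μ`
and transition matrix `P`. -/
noncomputable def markovFD {α : Type*} [Fintype α] (μ : α → ℝ) (P : α → α → ℝ)
    (T : ℕ) (x : Fin T → α) : ℝ :=
  ∏ i : Fin T,
    if (i : ℕ) = 0 then μ (x i)
    else P (x ⟨(i : ℕ) - 1, lt_of_le_of_lt (Nat.sub_le _ _) i.isLt⟩) (x i)

/-- Irreducibility of a transition matrix. -/
def MCIrreducible {α : Type*} [Fintype α] [DecidableEq α] (P : Matrix α α ℝ) : Prop :=
  ∀ i j, ∃ n : ℕ, 0 < n ∧ 0 < (P ^ n) i j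

/-- Aperiodicity of a transition matrix. -/
def MCAperiodic {α : Type*} [Fintype α] [DecidableEq α] (P : Matrix α α ℝ) : Prop :=
  ∀ i, ∃ N : ℕ, ∀ n, N ≤ n → 0 < (P ^ n) i i

/-- Shannon conditional entropy `H(A | B)` of a joint PMF `J` on `A × B`. -/
noncomputable def condEnt2 {A B : Type*} [Fintype A] [Fintype B] (J : A → B → ℝ) : ℝ :=
  -∑ a, ∑ b, J a b * Real.log (J a b / (∑ a', J a' b))

/-- Joint PMF of `(X_1^T, Y_1^T)` with `Y_t = g(X_t)`. -/
noncomputable def coarseJointMC {α γ : Type*} [Fintype α] [Fintype γ]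
    (π : α → ℝ) (P : α → α → ℝ) (g : α → γ) (T : ℕ) :
    (Fin T → α) → (Fin T → γ) → ℝ :=
  fun x y => if ∀ i, y i = g (x i) then markovFD π P T x else 0

/-!
If every observation has at most `C` realizable preimages, then `H(X_1^T | Y_1^T) ≤ log C` for all
`T`, so the rate vanishes. Conversely, if some observation `y_1^T` has more than `|𝒳|²` realizable
preimages, two of them, `u ≠ v`, share their first and their last state. Cut a path of length `mT`
into `m` blocks of length `T`: any block equal to `u` or `v` can be exchanged for the other one
without changing `Y` or the transitions between blocks, and each exchange multiplies the
probability by a factor at least `ρ > 0`. A path with `k` such blocks therefore carries at most a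
`(1 + ρ)⁻ᵏ` share of the probability of its `Y`-fibre, so `H(X | Y) ≥ log (1 + ρ) · E[k]`, and by
stationarity `E[k] = m (p(u) + p(v))` grows linearly in `m`.
-/

lemma sum_fin_succ_fun_snoc {α M : Type*} [Fintype α] [AddCommMonoid M] {N : ℕ}
    (f : (Fin (N + 1) → α) → M) : ∑ x, f x = ∑ x : Fin N → α, ∑ a, f (Fin.snoc x a) := by
  rw [← (Fin.snocEquiv fun _ => α).sum_comp, Fintype.sum_prod_type_right]
  rfl

lemma sum_fin_succ_fun_cons {α M : Type*} [Fintype α] [AddCommMonoid M] {N : ℕ}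
    (f : (Fin (N + 1) → α) → M) : ∑ x, f x = ∑ x : Fin N → α, ∑ a, f (Fin.cons a x) := by
  rw [← (Fin.consEquiv fun _ => α).sum_comp, Fintype.sum_prod_type_right]
  rfl

lemma swap_apply_apply_of_apply_eq {α : Type*} {k : ℕ} {u v : Fin k → α} {t : Fin k}
    (h : u t = v t) (w : Fin k → α) : Equiv.swap u v w t = w t := by
  rw [Equiv.swap_apply_def]
  split_ifs with hu hv
  · rw [hu, h]
  · rw [hv, h]
  · rfl

open Filter Topology in
lemma nonpos_of_tendsto_div_of_mul_le {f : ℕ → ℝ}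
    (hf : Tendsto (fun T : ℕ => f T / T) atTop (𝓝 0)) {k : ℕ} (hk : 0 < k) {c : ℝ}
    (hc : ∀ m : ℕ, m * c ≤ f (m * k)) : c ≤ 0 := by
  have hsub : Tendsto (fun m => m * k) atTop atTop :=
    tendsto_atTop_mono (fun m => Nat.le_mul_of_pos_right m hk) tendsto_id
  have hk' : (0 : ℝ) < k := by exact_mod_cast hk
  have hlow : ∀ᶠ m : ℕ in atTop, c / k ≤ f (m * k) / ↑(m * k) := by
    filter_upwards [eventually_gt_atTop 0] with m hm
    have hm' : (0 : ℝ) < m := by exact_mod_cast hm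
    rw [Nat.cast_mul, le_div_iff₀ (by positivity)]
    calc c / k * (m * k) = m * c := by field_simp
      _ ≤ f (m * k) := hc m
  have := ge_of_tendsto (hf.comp hsub) hlow
  simpa using (div_le_iff₀ hk').1 this

open Filter Topology in
lemma tendsto_div_natCast_zero_of_le {f : ℕ → ℝ} {K : ℝ} (h0 : ∀ T, 0 ≤ f T)
    (hK : ∀ T, f T ≤ K) : Tendsto (fun T : ℕ => f T / T) atTop (𝓝 0) :=
  squeeze_zero (fun T => div_nonneg (h0 T) T.cast_nonneg)
    (fun T => div_le_div_of_nonneg_right (hK T) T.cast_nonneg)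
    (tendsto_const_div_atTop_nhds_zero_nat K)

section ConditionalEntropy

open Real

lemma sum_mul_log_div_le_mul_log_card {ι : Type*} (S : Finset ι) (q : ι → ℝ)
    (hq : ∀ a ∈ S, 0 ≤ q a) :
    ∑ a ∈ S, q a * log ((∑ b ∈ S, q b) / q a) ≤ (∑ a ∈ S, q a) * log S.card := by
  set s := ∑ b ∈ S, q b
  rcases S.eq_empty_or_nonempty with rfl | hne
  · simp
  have hN : (0 : ℝ) < S.card := by exact_mod_cast hne.card_pos
  -- `log y ≤ y - 1` at `y = s / (q a * #S)`
  have hterm : ∀ a ∈ S, q a * log (s / q a) ≤ s / S.card - q a + q a * log S.card := by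
    intro a ha
    rcases (hq a ha).eq_or_lt with h0 | hpos
    · rw [← h0, zero_mul, zero_mul, sub_zero, add_zero]
      exact div_nonneg (Finset.sum_nonneg hq) hN.le
    have hs : 0 < s := hpos.trans_le (Finset.single_le_sum hq ha)
    have hlog := log_le_sub_one_of_pos (div_pos hs (mul_pos hpos hN))
    rw [log_div hs.ne' (mul_pos hpos hN).ne', log_mul hpos.ne' hN.ne'] at hlog
    rw [log_div hs.ne' hpos.ne']
    have : q a * (s / (q a * S.card) - 1) = s / S.card - q a := by field_simp
    linarith [mul_le_mul_of_nonneg_left hlog hpos.le]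
  calc ∑ a ∈ S, q a * log (s / q a)
      ≤ ∑ a ∈ S, (s / S.card - q a + q a * log S.card) := Finset.sum_le_sum hterm
    _ = s * log S.card := by
      rw [Finset.sum_add_distrib, Finset.sum_sub_distrib, Finset.sum_const, nsmul_eq_mul,
        ← Finset.sum_mul]
      field_simp
      ring

variable {A B : Type*} [Fintype A] [Fintype B]

-- No positivity is needed: `J / p = (p / J)⁻¹` and `log x⁻¹ = -log x` for every real `x`.
lemma condEnt2_eq_sum_mul_log (J : A → B → ℝ) :
    condEnt2 J = ∑ a, ∑ b, J a b * log ((∑ a', J a' b) / J a b) := by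
  simp only [condEnt2, ← Finset.sum_neg_distrib, ← mul_neg, ← log_inv, inv_div]

lemma condEnt2_nonneg {J : A → B → ℝ} (hJ : ∀ a b, 0 ≤ J a b) : 0 ≤ condEnt2 J := by
  rw [condEnt2_eq_sum_mul_log]
  refine Finset.sum_nonneg fun a _ => Finset.sum_nonneg fun b _ => ?_
  rcases (hJ a b).eq_or_lt with h0 | hpos
  · rw [← h0, zero_mul]
  · refine mul_nonneg hpos.le (log_nonneg ?_)
    rw [one_le_div hpos]
    exact Finset.single_le_sum (fun a' _ => hJ a' b) (Finset.mem_univ a)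

lemma condEnt2_le_log {J : A → B → ℝ} (hJ : ∀ a b, 0 ≤ J a b)
    (htot : ∑ a, ∑ b, J a b = 1) (C : ℕ)
    (hC : ∀ b, 0 < ∑ a, J a b → (Finset.univ.filter fun a => J a b ≠ 0).card ≤ C) :
    condEnt2 J ≤ log C := by
  have hcol : ∀ b, ∑ a, J a b * log ((∑ a', J a' b) / J a b) ≤ (∑ a, J a b) * log C := by
    intro b
    set S := Finset.univ.filter fun a => J a b ≠ 0
    have hS (f : A → ℝ) (hf : ∀ a, J a b = 0 → f a = 0) : ∑ a ∈ S, f a = ∑ a, f a :=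
      Finset.sum_filter_of_ne fun a _ hfa hJ0 => hfa (hf a hJ0)
    rw [← hS (fun a => J a b) fun _ h => h, ← hS _ fun a h => by rw [h, zero_mul]]
    refine (sum_mul_log_div_le_mul_log_card S _ fun a _ => hJ a b).trans ?_
    rcases (Finset.sum_nonneg fun a (_ : a ∈ S) => hJ a b).eq_or_lt with h0 | hpos
    · rw [← h0, zero_mul, zero_mul]
    refine mul_le_mul_of_nonneg_left (log_le_log ?_ ?_) hpos.le
    · obtain ⟨a, ha, -⟩ := Finset.exists_ne_zero_of_sum_ne_zero hpos.ne'
      exact_mod_cast Finset.card_pos.2 ⟨a, ha⟩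
    · exact_mod_cast hC b (by rwa [hS (fun a => J a b) fun _ h => h] at hpos)
  rw [condEnt2_eq_sum_mul_log, Finset.sum_comm]
  calc _ ≤ ∑ b, (∑ a, J a b) * log C := Finset.sum_le_sum fun b _ => hcol b
    _ = log C := by rw [← Finset.sum_mul, Finset.sum_comm, htot, one_mul]

end ConditionalEntropy

namespace MarkovChain

section PathProbabilities

variable {α : Type*} [Fintype α] (π : α → ℝ) (P : α → α → ℝ)

noncomputable def pathWeight {n : ℕ} (w : Fin (n + 1) → α) : ℝ :=
  ∏ t : Fin n, P (w t.castSucc) (w t.succ)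

lemma markovFD_succ {n : ℕ} (x : Fin (n + 1) → α) :
    markovFD π P (n + 1) x = π (x 0) * pathWeight P x := by
  rw [markovFD, Fin.prod_univ_succ]
  rfl

lemma markovFD_snoc {n : ℕ} (x : Fin (n + 1) → α) (a : α) :
    markovFD π P (n + 2) (Fin.snoc x a) = markovFD π P (n + 1) x * P (x (Fin.last n)) a := by
  simp only [markovFD_succ, pathWeight, Fin.prod_univ_castSucc, Fin.succ_last, Fin.snoc_last,
    ← Fin.castSucc_succ, Fin.snoc_castSucc, ← Fin.castSucc_zero, mul_assoc]

lemma markovFD_cons {n : ℕ} (a : α) (x : Fin (n + 1) → α) :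
    markovFD π P (n + 2) (Fin.cons a x) = π a * P a (x 0) * pathWeight P x := by
  simp only [markovFD_succ, pathWeight, Fin.prod_univ_succ, Fin.cons_succ,
    ← Fin.succ_castSucc, ← Fin.castSucc_zero, mul_assoc]
  rfl

variable {π P}

lemma markovFD_nonneg (hπ0 : ∀ a, 0 ≤ π a) (hP0 : ∀ a b, 0 ≤ P a b) {N : ℕ}
    (x : Fin N → α) : 0 ≤ markovFD π P N x :=
  Finset.prod_nonneg fun i _ => by split <;> [exact hπ0 _; exact hP0 _ _]

lemma sum_markovFD_snoc (hP1 : ∀ a, ∑ b, P a b = 1) {N : ℕ} [NeZero N] (x : Fin N → α) :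
    ∑ a, markovFD π P (N + 1) (Fin.snoc x a) = markovFD π P N x := by
  obtain ⟨n, rfl⟩ := Nat.exists_eq_add_one_of_ne_zero (NeZero.ne N)
  simp only [markovFD_snoc, ← Finset.mul_sum, hP1, mul_one]

lemma sum_markovFD_cons (hinv : ∀ b, ∑ a, π a * P a b = π b) {N : ℕ} [NeZero N]
    (x : Fin N → α) : ∑ a, markovFD π P (N + 1) (Fin.cons a x) = markovFD π P N x := by
  obtain ⟨n, rfl⟩ := Nat.exists_eq_add_one_of_ne_zero (NeZero.ne N)
  simp_rw [markovFD_cons]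
  rw [← Finset.sum_mul, hinv, markovFD_succ]

lemma sum_markovFD (hπ1 : ∑ a, π a = 1) (hP1 : ∀ a, ∑ b, P a b = 1) (N : ℕ) :
    ∑ x : Fin N → α, markovFD π P N x = 1 := by
  induction N with
  | zero => simp [markovFD]
  | succ N ih =>
    rcases N with _ | N
    · rw [← hπ1]
      exact Fintype.sum_equiv (Equiv.funUnique (Fin 1) α) _ _ fun _ => by simp [markovFD]
    · rw [sum_fin_succ_fun_snoc, ← ih]
      exact Finset.sum_congr rfl fun x _ => sum_markovFD_snoc hP1 x

lemma sum_mul_markovFD_castAdd (hP1 : ∀ a, ∑ b, P a b = 1) {k : ℕ} [NeZero k]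
    (f : (Fin k → α) → ℝ) (r : ℕ) :
    ∑ x : Fin (k + r) → α, f (fun t => x (Fin.castAdd r t)) * markovFD π P (k + r) x
      = ∑ z, f z * markovFD π P k z := by
  induction r with
  | zero => rfl
  | succ r ih =>
    change ∑ x : Fin (k + r + 1) → α, _ = _
    rw [sum_fin_succ_fun_snoc, ← ih]
    refine Finset.sum_congr rfl fun x _ => ?_
    rw [← sum_markovFD_snoc hP1 x, Finset.mul_sum]
    refine Finset.sum_congr rfl fun a _ => ?_
    congr 2
    funext t
    exact Fin.snoc_castSucc (α := fun _ => α) (i := Fin.castAdd r t) ..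

lemma sum_mul_markovFD_addNat (hinv : ∀ b, ∑ a, π a * P a b = π b) {k : ℕ} [NeZero k]
    (f : (Fin k → α) → ℝ) (s : ℕ) :
    ∑ x : Fin (k + s) → α, f (fun t => x (t.addNat s)) * markovFD π P (k + s) x
      = ∑ z, f z * markovFD π P k z := by
  induction s with
  | zero => rfl
  | succ s ih =>
    change ∑ x : Fin (k + s + 1) → α, _ = _
    rw [sum_fin_succ_fun_cons, ← ih]
    refine Finset.sum_congr rfl fun x _ => ?_
    rw [← sum_markovFD_cons hinv x, Finset.mul_sum]
    exact Finset.sum_congr rfl fun a _ => by congr 2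

end PathProbabilities

def window {α : Type*} {N : ℕ} (x : Fin N → α) (k s : ℕ) (h : k + s ≤ N) : Fin k → α :=
  fun t => x ⟨t + s, by omega⟩

section Windows

variable {α : Type*} [Fintype α] {π : α → ℝ} {P : α → α → ℝ}

lemma sum_mul_markovFD_window (hP1 : ∀ a, ∑ b, P a b = 1)
    (hinv : ∀ b, ∑ a, π a * P a b = π b) {N k : ℕ} [NeZero k] (s : ℕ) (h : k + s ≤ N)
    (f : (Fin k → α) → ℝ) :
    ∑ x : Fin N → α, f (window x k s h) * markovFD π P N x = ∑ z, f z * markovFD π P k z := by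
  obtain ⟨r, rfl⟩ : ∃ r, N = k + s + r := ⟨N - (k + s), by omega⟩
  exact (sum_mul_markovFD_castAdd hP1 (fun y => f fun t => y (t.addNat s)) r).trans
    (sum_mul_markovFD_addNat hinv f s)

lemma markovFD_mul_pathWeight_window {N n s : ℕ} (h : n + 1 + s ≤ N) {x x' : Fin N → α}
    (hx : ∀ p : Fin N, (p : ℕ) ≤ s ∨ n + s ≤ p → x' p = x p) :
    markovFD π P N x' * pathWeight P (window x (n + 1) s h)
      = markovFD π P N x * pathWeight P (window x' (n + 1) s h) := by
  -- Split `markovFD` into its factors at `s < i ≤ n + s`, which form the path weight of the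
  -- window, and the others, which do not see the interior of the window.
  let F (y : Fin N → α) (i : Fin N) : ℝ :=
    if (i : ℕ) = 0 then π (y i) else P (y ⟨i - 1, by omega⟩) (y i)
  let I : Finset (Fin N) := {i | s < i ∧ (i : ℕ) ≤ n + s}
  have hI (y : Fin N → α) : ∏ i ∈ I, F y i = pathWeight P (window y (n + 1) s h) := by
    symm
    refine Finset.prod_bij (fun t _ => ⟨t + 1 + s, by omega⟩) (fun t _ => ?_)
      (fun a _ b _ hab => ?_) (fun i hi => ?_) (fun t _ => ?_)
    · simp only [I, Finset.mem_filter, Finset.mem_univ, true_and]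
      omega
    · simp only [Fin.mk.injEq] at hab
      omega
    · simp only [I, Finset.mem_filter, Finset.mem_univ, true_and] at hi
      exact ⟨⟨i - 1 - s, by omega⟩, Finset.mem_univ _, Fin.ext (by simp only; omega)⟩
    · simp only [F, window, Fin.val_castSucc, Fin.val_succ, add_eq_zero, one_ne_zero,
        and_false, false_and, if_false]
      exact congrArg₂ P (congrArg y (Fin.ext (by simp only; omega))) rfl
  have hIc : ∀ i ∈ Iᶜ, F x' i = F x i := by
    intro i hi
    simp only [I, Finset.compl_filter, Finset.mem_filter, Finset.mem_univ, true_and,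
      not_and_or, not_lt, not_le] at hi
    simp only [F]
    split_ifs
    · exact congrArg π (hx i (by omega))
    · rw [hx i (by omega), hx ⟨i - 1, _⟩ (by simp only; omega)]
  have hsplit (y : Fin N → α) : markovFD π P N y = (∏ i ∈ I, F y i) * ∏ i ∈ Iᶜ, F y i :=
    (Finset.prod_mul_prod_compl I (F y)).symm
  rw [hsplit, hsplit x, hI, hI, Finset.prod_congr rfl hIc]
  ring

end Windows

section CoarseGraining

variable {α γ : Type*} [Fintype α] [Fintype γ] {π : α → ℝ} {P : α → α → ℝ} {g : α → γ}
  {T : ℕ}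

lemma sum_coarseJointMC_right (x : Fin T → α) (f : (Fin T → γ) → ℝ → ℝ)
    (hf : ∀ y, f y 0 = 0) :
    ∑ y, f y (coarseJointMC π P g T x y) = f (g ∘ x) (markovFD π P T x) := by
  rw [Finset.sum_eq_single (g ∘ x) (fun y _ hy => ?_) (by simp)]
  · exact congrArg _ (if_pos fun _ => rfl)
  · rw [coarseJointMC, if_neg fun h => hy (funext h : y = fun i => g (x i)), hf]

lemma coarseJointMC_eq_ite (x : Fin T → α) (y : Fin T → γ) :
    coarseJointMC π P g T x y = if ∀ t, g (x t) = y t then markovFD π P T x else 0 :=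
  if_congr (forall_congr' fun _ => eq_comm) rfl rfl

lemma coarseJointMC_nonneg (hπ0 : ∀ a, 0 ≤ π a) (hP0 : ∀ a b, 0 ≤ P a b)
    (x : Fin T → α) (y : Fin T → γ) : 0 ≤ coarseJointMC π P g T x y := by
  unfold coarseJointMC
  split_ifs
  exacts [markovFD_nonneg hπ0 hP0 x, le_rfl]

lemma coarseJointMC_ne_zero_iff (hπ0 : ∀ a, 0 ≤ π a) (hP0 : ∀ a b, 0 ≤ P a b)
    (x : Fin T → α) (y : Fin T → γ) :
    coarseJointMC π P g T x y ≠ 0 ↔ 0 < markovFD π P T x ∧ ∀ t, g (x t) = y t := by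
  rw [coarseJointMC_eq_ite]
  split_ifs with h
  · simp [h, (markovFD_nonneg hπ0 hP0 x).lt_iff_ne, ne_comm]
  · simp [h]

lemma sum_coarseJointMC (hπ1 : ∑ a, π a = 1) (hP1 : ∀ a, ∑ b, P a b = 1) :
    ∑ x, ∑ y, coarseJointMC π P g T x y = 1 := by
  simp_rw [sum_coarseJointMC_right _ (fun _ J => J) fun _ => rfl]
  exact sum_markovFD hπ1 hP1 T

lemma condEnt2_coarseJointMC :
    condEnt2 (coarseJointMC π P g T) = ∑ x, markovFD π P T x *
      Real.log ((∑ x', coarseJointMC π P g T x' (g ∘ x)) / markovFD π P T x) := by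
  rw [condEnt2_eq_sum_mul_log]
  exact Finset.sum_congr rfl fun x _ => sum_coarseJointMC_right x
    (fun y J => J * Real.log ((∑ x', coarseJointMC π P g T x' y) / J)) fun _ => zero_mul _

lemma mul_sum_le_condEnt2_coarseJointMC (hπ0 : ∀ a, 0 ≤ π a) (hP0 : ∀ a b, 0 ≤ P a b)
    {c : ℝ} (hc : 0 < c) (k : (Fin T → α) → ℕ)
    (hk : ∀ x, c ^ k x * markovFD π P T x ≤ ∑ x', coarseJointMC π P g T x' (g ∘ x)) :
    Real.log c * ∑ x, k x * markovFD π P T x ≤ condEnt2 (coarseJointMC π P g T) := by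
  rw [condEnt2_coarseJointMC, Finset.mul_sum]
  refine Finset.sum_le_sum fun x _ => ?_
  rcases (markovFD_nonneg hπ0 hP0 x).eq_or_lt with h0 | hpos
  · rw [← h0]; simp
  have := Real.log_le_log (by positivity) ((le_div_iff₀ hpos).2 (hk x))
  rw [Real.log_pow] at this
  linarith [mul_le_mul_of_nonneg_left this hpos.le]

end CoarseGraining

section Blocks

variable {α : Type*} {m n : ℕ}

lemma block_le (j : Fin m) : n + 1 + (n + 1) * j ≤ m * (n + 1) := by
  nlinarith [j.isLt]

def block (x : Fin (m * (n + 1)) → α) (j : Fin m) : Fin (n + 1) → α :=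
  fun t => x (finProdFinEquiv (j, t))

lemma block_eq_window (x : Fin (m * (n + 1)) → α) (j : Fin m) :
    block x j = window x (n + 1) ((n + 1) * j) (block_le j) :=
  rfl

lemma eq_of_block_eq {x x' : Fin (m * (n + 1)) → α} (h : ∀ j, block x j = block x' j) :
    x = x' := by
  funext p
  obtain ⟨⟨j, t⟩, rfl⟩ := finProdFinEquiv.surjective p
  exact congrFun (h j) t

variable (u v : Fin (n + 1) → α)

noncomputable def swapBlocks (S : Finset (Fin m)) (x : Fin (m * (n + 1)) → α) :
    Fin (m * (n + 1)) → α :=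
  fun p =>
    let q := finProdFinEquiv.symm p
    if q.1 ∈ S then Equiv.swap u v (block x q.1) q.2 else x p

noncomputable def swappableBlocks (x : Fin (m * (n + 1)) → α) : Finset (Fin m) :=
  Finset.univ.filter fun j => block x j ∈ ({u, v} : Finset _)

lemma block_swapBlocks (S : Finset (Fin m)) (x : Fin (m * (n + 1)) → α) (j : Fin m) :
    block (swapBlocks u v S x) j = if j ∈ S then Equiv.swap u v (block x j) else block x j := by
  funext t
  simp only [block, swapBlocks, Equiv.symm_apply_apply]
  split_ifs <;> rfl

lemma swapBlocks_empty (x : Fin (m * (n + 1)) → α) : swapBlocks u v ∅ x = x :=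
  eq_of_block_eq fun j => by simp [block_swapBlocks]

lemma swapBlocks_insert {S : Finset (Fin m)} {j : Fin m} (hj : j ∉ S)
    (x : Fin (m * (n + 1)) → α) :
    swapBlocks u v (insert j S) x = swapBlocks u v {j} (swapBlocks u v S x) := by
  refine eq_of_block_eq fun i => ?_
  simp only [block_swapBlocks, Finset.mem_insert, Finset.mem_singleton]
  by_cases hi : i = j
  · subst hi; simp [hj]
  · simp [hi]

lemma comp_swapBlocks {γ : Type*} {g : α → γ} (hg : ∀ t, g (u t) = g (v t))
    (S : Finset (Fin m)) (x : Fin (m * (n + 1)) → α) : g ∘ swapBlocks u v S x = g ∘ x := by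
  funext p
  obtain ⟨⟨j, t⟩, rfl⟩ := finProdFinEquiv.surjective p
  change g (block (swapBlocks u v S x) j t) = g (block x j t)
  rw [block_swapBlocks]
  split_ifs
  · rw [Equiv.swap_apply_def]
    split_ifs with hu hv
    · rw [hu, hg]
    · rw [hv, hg]
    · rfl
  · rfl

lemma swap_block_ne (huv : u ≠ v) {x : Fin (m * (n + 1)) → α} {j : Fin m}
    (hj : j ∈ swappableBlocks u v x) : Equiv.swap u v (block x j) ≠ block x j := by
  simp only [swappableBlocks, Finset.mem_filter, Finset.mem_insert, Finset.mem_singleton,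
    Finset.mem_univ, true_and] at hj
  rcases hj with h | h <;> rw [h] <;> simp [huv, huv.symm]

lemma swapBlocks_injOn (huv : u ≠ v) (x : Fin (m * (n + 1)) → α) :
    Set.InjOn (swapBlocks u v · x) ((swappableBlocks u v x).powerset : Set _) := by
  intro S hS S' hS' hSS'
  simp only [Finset.coe_powerset, Set.mem_preimage, Set.mem_powerset_iff,
    Finset.coe_subset] at hS hS'
  ext j
  have hj := congrArg (block · j) hSS'
  simp only [block_swapBlocks] at hj
  constructor <;> intro h <;> by_contra h'
  · rw [if_pos h, if_neg h'] at hj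
    exact swap_block_ne u v huv (hS h) hj
  · rw [if_pos h, if_neg h'] at hj
    exact swap_block_ne u v huv (hS' h) hj.symm

end Blocks

section SwapEstimates

variable {α γ : Type*} [Fintype α] {m n : ℕ} {u v : Fin (n + 1) → α} {π : α → ℝ}
  {P : α → α → ℝ}

lemma markovFD_swapBlocks_singleton_mul (h0 : u 0 = v 0)
    (hlast : u (Fin.last n) = v (Fin.last n)) (x : Fin (m * (n + 1)) → α) (j : Fin m) :
    markovFD π P _ (swapBlocks u v {j} x) * pathWeight P (block x j)
      = markovFD π P _ x * pathWeight P (Equiv.swap u v (block x j)) := by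
  have hx : ∀ p : Fin (m * (n + 1)), (p : ℕ) ≤ (n + 1) * j ∨ n + (n + 1) * j ≤ p →
      swapBlocks u v {j} x p = x p := by
    intro p hp
    obtain ⟨⟨i, t⟩, rfl⟩ := finProdFinEquiv.surjective p
    change block (swapBlocks u v {j} x) i t = block x i t
    rw [block_swapBlocks]
    split_ifs with hi
    · rw [Finset.mem_singleton] at hi
      subst hi
      simp only [finProdFinEquiv_apply_val] at hp
      obtain rfl | rfl : t = 0 ∨ t = Fin.last n := by
        rcases hp with hp | hp
        · exact Or.inl (Fin.ext (by simp only [Fin.val_zero]; omega))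
        · exact Or.inr (Fin.ext (by simp only [Fin.val_last]; omega))
      exacts [swap_apply_apply_of_apply_eq h0 _, swap_apply_apply_of_apply_eq hlast _]
    · rfl
  have := markovFD_mul_pathWeight_window (π := π) (P := P) (block_le j) hx
  rwa [← block_eq_window, ← block_eq_window, block_swapBlocks,
    if_pos (Finset.mem_singleton_self j)] at this

variable (hπ0 : ∀ a, 0 ≤ π a) (hP0 : ∀ a b, 0 ≤ P a b) (h0 : u 0 = v 0)
  (hlast : u (Fin.last n) = v (Fin.last n)) {ρ : ℝ} (hρ0 : 0 ≤ ρ)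
  (hρu : ρ * pathWeight P u ≤ pathWeight P v) (hρv : ρ * pathWeight P v ≤ pathWeight P u)
  (hu : 0 < pathWeight P u) (hv : 0 < pathWeight P v)
include hπ0 hP0 h0 hlast hρ0 hρu hρv hu hv

lemma pow_mul_markovFD_le_swapBlocks (x : Fin (m * (n + 1)) → α) {S : Finset (Fin m)}
    (hS : S ⊆ swappableBlocks u v x) :
    ρ ^ S.card * markovFD π P _ x ≤ markovFD π P _ (swapBlocks u v S x) := by
  induction S using Finset.induction_on with
  | empty => rw [Finset.card_empty, pow_zero, one_mul, swapBlocks_empty]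
  | @insert j S hj ih =>
    rw [Finset.insert_subset_iff] at hS
    set y := swapBlocks u v S x
    have hblock : block y j = u ∨ block y j = v := by
      rw [show block y j = block x j by rw [block_swapBlocks, if_neg hj]]
      simpa only [Finset.mem_insert, Finset.mem_singleton] using (Finset.mem_filter.1 hS.1).2
    -- one swap multiplies the probability by `pathWeight P v / pathWeight P u` or its inverse
    have hstep : ρ * markovFD π P _ y ≤ markovFD π P _ (swapBlocks u v {j} y) := by
      have key := markovFD_swapBlocks_singleton_mul (π := π) (P := P) h0 hlast y j
      have hy := markovFD_nonneg hπ0 hP0 y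
      rcases hblock with h | h
      · rw [h, Equiv.swap_apply_left] at key
        nlinarith
      · rw [h, Equiv.swap_apply_right] at key
        nlinarith
    rw [swapBlocks_insert u v hj, Finset.card_insert_of_notMem hj, pow_succ', mul_assoc]
    exact (mul_le_mul_of_nonneg_left (ih hS.2) hρ0).trans hstep

lemma one_add_pow_mul_markovFD_le [Fintype γ] (huv : u ≠ v) {g : α → γ}
    (hg : ∀ t, g (u t) = g (v t)) (x : Fin (m * (n + 1)) → α) :
    (1 + ρ) ^ (swappableBlocks u v x).card * markovFD π P _ x
      ≤ ∑ x', coarseJointMC π P g _ x' (g ∘ x) := by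
  set M := swappableBlocks u v x
  calc (1 + ρ) ^ M.card * markovFD π P _ x
      = ∑ S ∈ M.powerset, ρ ^ S.card * markovFD π P _ x := by
        rw [← Finset.sum_mul, add_comm, ← Finset.sum_pow_mul_eq_add_pow]
        simp
    _ ≤ ∑ S ∈ M.powerset, markovFD π P _ (swapBlocks u v S x) :=
        Finset.sum_le_sum fun S hS => pow_mul_markovFD_le_swapBlocks hπ0 hP0 h0 hlast hρ0
          hρu hρv hu hv x (Finset.mem_powerset.1 hS)
    _ = ∑ x' ∈ M.powerset.image (swapBlocks u v · x), markovFD π P _ x' :=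
        (Finset.sum_image (swapBlocks_injOn u v huv x)).symm
    _ ≤ ∑ x' with ∀ t, g (x' t) = g (x t), markovFD π P _ x' := by
        refine Finset.sum_le_sum_of_subset_of_nonneg ?_ fun x' _ _ =>
          markovFD_nonneg hπ0 hP0 x'
        intro x' hx'
        obtain ⟨S, -, rfl⟩ := Finset.mem_image.1 hx'
        simpa using congrFun (comp_swapBlocks u v hg S x)
    _ = ∑ x', coarseJointMC π P g _ x' (g ∘ x) := by
        simp_rw [coarseJointMC_eq_ite, Finset.sum_filter, Function.comp_apply]

end SwapEstimates

variable {α γ : Type*} [Fintype α] [Fintype γ] {m n : ℕ} {u v : Fin (n + 1) → α}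
  {π : α → ℝ} {P : α → α → ℝ} {g : α → γ}

lemma sum_card_swappableBlocks_mul_markovFD (hP1 : ∀ a, ∑ b, P a b = 1)
    (hinv : ∀ b, ∑ a, π a * P a b = π b) (huv : u ≠ v) :
    ∑ x : Fin (m * (n + 1)) → α, ((swappableBlocks u v x).card : ℝ) * markovFD π P _ x
      = m * (markovFD π P (n + 1) u + markovFD π P (n + 1) v) := by
  let f (z : Fin (n + 1) → α) : ℝ := if z ∈ ({u, v} : Finset _) then 1 else 0
  have hblock (j : Fin m) : ∑ x : Fin (m * (n + 1)) → α, f (block x j) * markovFD π P _ x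
      = markovFD π P (n + 1) u + markovFD π P (n + 1) v := by
    simp_rw [block_eq_window, sum_mul_markovFD_window hP1 hinv _ _ f, f, ite_mul, one_mul,
      zero_mul, Finset.sum_ite_mem, Finset.univ_inter, Finset.sum_pair huv]
  simp_rw [swappableBlocks, Finset.card_filter, Nat.cast_sum, Finset.sum_mul]
  rw [Finset.sum_comm]
  simp only [Nat.cast_ite, Nat.cast_one, Nat.cast_zero]
  rw [Finset.sum_congr rfl fun j _ => hblock j, Finset.sum_const, Finset.card_univ,
    Fintype.card_fin, nsmul_eq_mul]

theorem exists_pos_mul_le_condEnt2 (hπ0 : ∀ a, 0 ≤ π a) (hP0 : ∀ a b, 0 ≤ P a b)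
    (hP1 : ∀ a, ∑ b, P a b = 1) (hinv : ∀ b, ∑ a, π a * P a b = π b) (huv : u ≠ v)
    (h0 : u 0 = v 0) (hlast : u (Fin.last n) = v (Fin.last n)) (hg : ∀ t, g (u t) = g (v t))
    (hu : 0 < markovFD π P (n + 1) u) (hv : 0 < markovFD π P (n + 1) v) :
    ∃ c > 0, ∀ m : ℕ, m * c ≤ condEnt2 (coarseJointMC π P g (m * (n + 1))) := by
  have hWu := pos_of_mul_pos_right (markovFD_succ π P u ▸ hu) (hπ0 _)
  have hWv := pos_of_mul_pos_right (markovFD_succ π P v ▸ hv) (hπ0 _)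
  set ρ := min (pathWeight P v / pathWeight P u) (pathWeight P u / pathWeight P v)
  have hρ : 0 < ρ := lt_min (div_pos hWv hWu) (div_pos hWu hWv)
  have hρu : ρ * pathWeight P u ≤ pathWeight P v := (le_div_iff₀ hWu).1 (min_le_left _ _)
  have hρv : ρ * pathWeight P v ≤ pathWeight P u := (le_div_iff₀ hWv).1 (min_le_right _ _)
  refine ⟨Real.log (1 + ρ) * (markovFD π P _ u + markovFD π P _ v),
    mul_pos (Real.log_pos (by linarith)) (add_pos hu hv), fun m => ?_⟩
  calc m * (Real.log (1 + ρ) * (markovFD π P _ u + markovFD π P _ v))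
      = Real.log (1 + ρ) * ∑ x, ((swappableBlocks u v x).card : ℝ) * markovFD π P _ x := by
        rw [sum_card_swappableBlocks_mul_markovFD hP1 hinv huv]
        ring
    _ ≤ _ := mul_sum_le_condEnt2_coarseJointMC hπ0 hP0 (by linarith) _ fun x =>
        one_add_pow_mul_markovFD_le hπ0 hP0 h0 hlast hρ.le hρu hρv hWu hWv huv hg x

end MarkovChain

open MarkovChain in
theorem zero_loss_rate_iff_bounded_preimages_general
    {α γ : Type*} [Fintype α] [Fintype γ]
    (P : Matrix α α ℝ) (hP0 : ∀ i j, 0 ≤ P i j) (hP1 : ∀ i, ∑ j, P i j = 1)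
    (π : α → ℝ) (hπ0 : ∀ i, 0 ≤ π i) (hπ1 : ∑ i, π i = 1)
    (hinv : ∀ j, ∑ i, π i * P i j = π j)
    (g : α → γ) :
    Filter.Tendsto
        (fun T : ℕ => condEnt2 (coarseJointMC π (fun a b => P a b) g T) / T)
        Filter.atTop (nhds 0)
      ↔ ∃ C : ℕ, ∀ T : ℕ, ∀ y : Fin T → γ,
          0 < (∑ x : Fin T → α,
            if ∀ t, g (x t) = y t then markovFD π (fun a b => P a b) T x else 0) →
          (Finset.univ.filter fun x : Fin T → α =>
            0 < markovFD π (fun a b => P a b) T x ∧ ∀ t, g (x t) = y t).card ≤ C := by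
  simp_rw [← coarseJointMC_eq_ite, ← coarseJointMC_ne_zero_iff hπ0 hP0]
  constructor
  · intro htend
    -- the `+ 1` rules out `T = 0`, where the empty path is a realizable preimage
    refine ⟨Fintype.card (α × α) + 1, fun T y _ => ?_⟩
    by_contra! hcard
    obtain ⟨n, rfl⟩ : ∃ n, T = n + 1 := Nat.exists_eq_add_one_of_ne_zero fun hT => by
      subst hT
      exact absurd (hcard.trans_le (Finset.card_le_univ _)) (by simp)
    obtain ⟨u, hu, v, hv, huv, hends⟩ := Finset.exists_ne_map_eq_of_card_lt_of_maps_to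
      (f := fun x : Fin (n + 1) → α => (x 0, x (Fin.last n)))
      (t := (Finset.univ : Finset (α × α))) (Nat.lt_of_succ_lt hcard)
      fun _ _ => Finset.mem_coe.2 (Finset.mem_univ _)
    simp only [coarseJointMC_ne_zero_iff hπ0 hP0, Finset.mem_filter, Finset.mem_univ,
      true_and] at hu hv
    obtain ⟨c, hc, hlow⟩ := exists_pos_mul_le_condEnt2 hπ0 hP0 hP1 hinv huv
      (congrArg Prod.fst hends) (congrArg Prod.snd hends)
      (fun t => (hu.2 t).trans (hv.2 t).symm) hu.1 hv.1
    exact hc.not_ge (nonpos_of_tendsto_div_of_mul_le htend n.succ_pos hlow)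
  · rintro ⟨C, hC⟩
    exact tendsto_div_natCast_zero_of_le
      (fun T => condEnt2_nonneg (coarseJointMC_nonneg hπ0 hP0))
      fun T => condEnt2_le_log (coarseJointMC_nonneg hπ0 hP0) (sum_coarseJointMC hπ1 hP1) C (hC T)

/-- For a stationary irreducible aperiodic Markov chain `X` and a coarse
graining `Y_t = g(X_t)`, the information loss rate `lim_T H(X_1^T|Y_1^T)/T` is zero iff the
number of realizable preimages `|R(Y_1^T)|` is almost surely uniformly bounded over `T`. -/
theorem zero_loss_rate_iff_bounded_preimages
    {α γ : Type*} [Fintype α] [DecidableEq α] [Fintype γ]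
    (P : Matrix α α ℝ) (hP0 : ∀ i j, 0 ≤ P i j) (hP1 : ∀ i, ∑ j, P i j = 1)
    (hirr : MCIrreducible P) (hap : MCAperiodic P)
    (π : α → ℝ) (hπ0 : ∀ i, 0 ≤ π i) (hπ1 : ∑ i, π i = 1)
    (hinv : ∀ j, ∑ i, π i * P i j = π j)
    (g : α → γ) :
    Filter.Tendsto
        (fun T : ℕ => condEnt2 (coarseJointMC π (fun a b => P a b) g T) / T)
        Filter.atTop (nhds 0)
      ↔ ∃ C : ℕ, ∀ T : ℕ, ∀ y : Fin T → γ,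
          0 < (∑ x : Fin T → α,
            if ∀ t, g (x t) = y t then markovFD π (fun a b => P a b) T x else 0) →
          (Finset.univ.filter fun x : Fin T → α =>
            0 < markovFD π (fun a b => P a b) T x ∧ ∀ t, g (x t) = y t).card ≤ C :=
  zero_loss_rate_iff_bounded_preimages_general P hP0 hP1 π hπ0 hπ1 hinv g
end

section
/- Let X be a stationary, irreducible, aperiodic Markov chain on a finite state space 𝒳 whose transition matrix P has all entries strictly positive, let g : 𝒳 → 𝒴 be a non-injective function, and let Y_t = g(X_t). Then the conditional entropy rate lim_{T→∞} (1/T) H(X_1^T | Y_1^T) is strictly positive. -/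
open Classical

/-!
Let `m > 0` be the smallest entry of `P`. Stationarity gives `m ≤ π ≤ 1`, so every factor of
the path weight `markovFD π P T x` lies in `[m, 1]`; since the factor at time `i` only involves
`x (i - 1)` and `x i`, altering a path at the sites of `S` costs at most a factor `m ^ (2 * #S)`.
Pick `a ≠ b` with `g a = g b`. Any set of the sites where `x` visits `a` can be switched to `b`
without changing `g ∘ x`, so the `Y`-fibre of `x` carries at least `(1 + m²) ^ k` times the
weight of `x`, where `k` is the number of visits of `x` to `a`. Hence
`H(X₁ᵀ | Y₁ᵀ) ≥ E[k] log (1 + m²)`, and `E[k] ≥ T m² / |α|` because, by the same switching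
argument at a single site, the chain is in `a` at any given time with probability at least
`m² / |α|`.
-/

open Finset Function

namespace Finset

variable {ι κ : Type*}

theorem sum_le_sum_of_injOn {s : Finset ι} {t : Finset κ} {f : ι → ℝ} {g : κ → ℝ}
    (e : ι → κ) (he : Set.InjOn e s) (hst : Set.MapsTo e s t) (hg : ∀ j ∈ t, 0 ≤ g j)
    (h : ∀ i ∈ s, f i ≤ g (e i)) : ∑ i ∈ s, f i ≤ ∑ j ∈ t, g j :=
  calc ∑ i ∈ s, f i ≤ ∑ i ∈ s, g (e i) := sum_le_sum h
    _ = ∑ j ∈ s.image e, g j := (sum_image he).symm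
    _ ≤ ∑ j ∈ t, g j :=
      sum_le_sum_of_subset_of_nonneg (image_subset_iff.2 hst) fun j hj _ => hg j hj

theorem pow_card_mul_prod_le [Fintype ι] {f g : ι → ℝ} {c : ℝ} (B : Finset ι)
    (hc : 0 ≤ c) (hf : ∀ i, 0 ≤ f i) (hB : ∀ i ∈ B, c * f i ≤ g i)
    (hBc : ∀ i ∉ B, f i ≤ g i) :
    c ^ #B * ∏ i, f i ≤ ∏ i, g i :=
  calc c ^ #B * ∏ i, f i = ∏ i, (if i ∈ B then c else 1) * f i := by
        rw [prod_mul_distrib, prod_ite_mem, univ_inter, prod_const]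
    _ ≤ ∏ i, g i := by
        refine prod_le_prod (fun i _ => by split_ifs <;> positivity [hf i]) fun i _ => ?_
        split_ifs with hi
        · exact hB i hi
        · simpa using hBc i hi

theorem injOn_piecewise_const {β : Type*} [DecidableEq ι] {A : Finset ι} {x : ι → β} {b : β}
    (hb : ∀ t ∈ A, x t ≠ b) :
    Set.InjOn (fun S : Finset ι => S.piecewise (fun _ => b) x) A.powerset := by
  intro S hS S' hS' h
  rw [mem_coe, mem_powerset] at hS hS'
  ext t
  have ht := congrFun h t
  by_cases h1 : t ∈ S <;> by_cases h2 : t ∈ S' <;>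
    simp only [h1, h2, piecewise_eq_of_mem, piecewise_eq_of_notMem, not_false_eq_true] at ht ⊢
  exacts [(hb t (hS h1) ht.symm).elim, (hb t (hS' h2) ht).elim]

end Finset

section MarkovWeights

variable {α : Type*} [Fintype α] {μ : α → ℝ} {P : α → α → ℝ} {m : ℝ} {T : ℕ}

theorem markovFD_pos (hμ : ∀ a, 0 < μ a) (hP : ∀ a b, 0 < P a b) (x : Fin T → α) :
    0 < markovFD μ P T x :=
  prod_pos fun i _ => by split_ifs <;> [exact hμ _; exact hP _ _]

theorem markovFD_nonneg (hμ : ∀ a, 0 ≤ μ a) (hP : ∀ a b, 0 ≤ P a b) (x : Fin T → α) :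
    0 ≤ markovFD μ P T x :=
  prod_nonneg fun i _ => by split_ifs <;> [exact hμ _; exact hP _ _]

theorem pow_mul_markovFD_le (hm0 : 0 ≤ m) (hm1 : m ≤ 1) (hμ : ∀ a, μ a ∈ Set.Icc m 1)
    (hP : ∀ a b, P a b ∈ Set.Icc m 1) {x x' : Fin T → α} {S : Finset (Fin T)}
    (hS : ∀ i ∉ S, x' i = x i) :
    m ^ (2 * #S) * markovFD μ P T x ≤ markovFD μ P T x' := by
  let prev (i : Fin T) : Fin T := ⟨(i : ℕ) - 1, lt_of_le_of_lt (Nat.sub_le _ _) i.isLt⟩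
  have hfactor (y : Fin T → α) (i : Fin T) :
      (if (i : ℕ) = 0 then μ (y i) else P (y (prev i)) (y i)) ∈ Set.Icc m 1 := by
    split_ifs <;> [exact hμ _; exact hP _ _]
  -- the factors that can differ: those at the sites of `S` and right after them
  let B := S ∪ univ.filter fun i : Fin T => (i : ℕ) ≠ 0 ∧ prev i ∈ S
  have hB : #B ≤ 2 * #S := by
    have : #{i : Fin T | (i : ℕ) ≠ 0 ∧ prev i ∈ S} ≤ #S :=
      card_le_card_of_injOn prev (fun i hi => (mem_filter.1 hi).2.2) fun i hi j hj hij => by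
        simp only [coe_filter, Set.mem_ofPred_eq, Fin.ext_iff, prev] at hi hj hij ⊢
        omega
    exact (card_union_le _ _).trans (by omega)
  refine (mul_le_mul_of_nonneg_right (pow_le_pow_of_le_one hm0 hm1 hB)
    (prod_nonneg fun i _ => hm0.trans (hfactor x i).1)).trans
    (pow_card_mul_prod_le B hm0 (fun i => hm0.trans (hfactor x i).1) (fun i _ => ?_) fun i hi => ?_)
  · calc m * _ ≤ m * 1 := mul_le_mul_of_nonneg_left (hfactor x i).2 hm0
      _ ≤ _ := by rw [mul_one]; exact (hfactor x' i).1
  · have hprev : (i : ℕ) ≠ 0 → x' (prev i) = x (prev i) := fun h0 =>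
      hS _ fun h => hi (mem_union_right _ (mem_filter.2 ⟨mem_univ _, h0, h⟩))
    rw [hS i fun h => hi (mem_union_left _ h)]
    split_ifs with h0
    · exact le_rfl
    · rw [hprev h0]

theorem markovFD_cons (μ : α → ℝ) (P : α → α → ℝ) (a : α) (x : Fin T → α) :
    markovFD μ P (T + 1) (Fin.cons a x) = μ a * markovFD (P a) P T x := by
  rw [markovFD, Fin.prod_univ_succ, markovFD]
  congr 1
  refine prod_congr rfl fun i _ => ?_
  rcases i with ⟨_ | k, hk⟩ <;> rfl

theorem sum_markovFD_eq_one (hP : ∀ a, ∑ b, P a b = 1) (hμ : ∑ a, μ a = 1) :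
    ∑ x, markovFD μ P T x = 1 := by
  induction T generalizing μ with
  | zero => simp [markovFD]
  | succ T ih =>
    rw [← (Fin.consEquiv fun _ => α).sum_comp, Fintype.sum_prod_type]
    change ∑ a, ∑ y, markovFD μ P (T + 1) (Fin.cons a y) = 1
    simp_rw [markovFD_cons, ← mul_sum, ih (hP _), mul_one, hμ]

theorem sq_mul_sum_markovFD_le (hm0 : 0 ≤ m) (hm1 : m ≤ 1) (hμ : ∀ a, μ a ∈ Set.Icc m 1)
    (hP : ∀ a b, P a b ∈ Set.Icc m 1) (t : Fin T) (a b : α) :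
    m ^ 2 * ∑ x with x t = b, markovFD μ P T x ≤ ∑ x with x t = a, markovFD μ P T x := by
  have hinv : Set.LeftInvOn (fun x : Fin T → α => update x t b) (update · t a)
      ({x | x t = b} : Finset (Fin T → α)) := fun x hx => by
    dsimp only
    rw [update_idem, ← (mem_filter.1 hx).2, update_eq_self]
  rw [mul_sum]
  refine sum_le_sum_of_injOn (update · t a) hinv.injOn (fun x _ => by simp)
    (fun x _ => markovFD_nonneg (fun a => hm0.trans (hμ a).1) (fun a b => hm0.trans (hP a b).1) x)
    fun x _ => ?_
  simpa using pow_mul_markovFD_le (S := {t}) hm0 hm1 hμ hP fun i hi =>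
    update_of_ne (by simpa using hi) _ _

theorem sq_div_card_le_sum_markovFD (hm0 : 0 ≤ m) (hm1 : m ≤ 1)
    (hμ : ∀ a, μ a ∈ Set.Icc m 1) (hP : ∀ a b, P a b ∈ Set.Icc m 1)
    (hP1 : ∀ a, ∑ b, P a b = 1) (hμ1 : ∑ a, μ a = 1) (t : Fin T) (a : α) :
    m ^ 2 / Fintype.card α ≤ ∑ x with x t = a, markovFD μ P T x := by
  rw [div_le_iff₀' (by simpa using Fintype.card_pos_iff.2 ⟨a⟩)]
  calc m ^ 2 = ∑ b, m ^ 2 * ∑ x with x t = b, markovFD μ P T x := by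
        rw [← mul_sum]
        simp_rw [sum_filter]
        rw [sum_comm]
        simp [sum_markovFD_eq_one hP1 hμ1]
    _ ≤ ∑ _b : α, ∑ x with x t = a, markovFD μ P T x :=
        sum_le_sum fun b _ => sq_mul_sum_markovFD_le hm0 hm1 hμ hP t a b
    _ = _ := by rw [sum_const, card_univ, nsmul_eq_mul]

theorem pow_mul_markovFD_le_sum_fiber {γ : Type*} (hm0 : 0 ≤ m) (hm1 : m ≤ 1)
    (hμ : ∀ a, μ a ∈ Set.Icc m 1) (hP : ∀ a b, P a b ∈ Set.Icc m 1) {g : α → γ}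
    {a b : α} (hab : a ≠ b) (hg : g a = g b) (x : Fin T → α) :
    (1 + m ^ 2) ^ #{t | x t = a} * markovFD μ P T x
      ≤ ∑ x' with g ∘ x' = g ∘ x, markovFD μ P T x' := by
  set A : Finset (Fin T) := {t | x t = a}
  have hxA : ∀ t ∈ A, x t = a := fun t ht => (mem_filter.1 ht).2
  calc (1 + m ^ 2) ^ #A * markovFD μ P T x
      = ∑ S ∈ A.powerset, m ^ (2 * #S) * markovFD μ P T x := by
        rw [add_comm, ← sum_pow_mul_eq_add_pow, sum_mul]
        exact sum_congr rfl fun S _ => by rw [one_pow, mul_one, pow_mul]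
    _ ≤ ∑ x' with g ∘ x' = g ∘ x, markovFD μ P T x' := by
        refine sum_le_sum_of_injOn (fun S => S.piecewise (fun _ => b) x)
          (injOn_piecewise_const fun t ht => (hxA t ht).trans_ne hab) (fun S hS => ?_)
          (fun x' _ => markovFD_nonneg (fun a => hm0.trans (hμ a).1)
            (fun a b => hm0.trans (hP a b).1) x')
          fun S _ => pow_mul_markovFD_le hm0 hm1 hμ hP fun i hi => piecewise_eq_of_notMem _ _ _ hi
        rw [mem_coe, mem_powerset] at hS
        refine mem_filter.2 ⟨mem_univ _, funext fun t => ?_⟩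
        by_cases ht : t ∈ S
        · simp [piecewise_eq_of_mem _ _ _ ht, hxA t (hS ht), hg]
        · simp [piecewise_eq_of_notMem _ _ _ ht]

end MarkovWeights

theorem condEnt2_ite_eq {A B : Type*} [Fintype A] [Fintype B] [DecidableEq B] (F : A → ℝ)
    (f : A → B) :
    condEnt2 (fun a b => if b = f a then F a else 0)
      = ∑ a, F a * Real.log ((∑ a' with f a' = f a, F a') / F a) := by
  rw [condEnt2, ← sum_neg_distrib]
  refine sum_congr rfl fun a _ => ?_
  rw [sum_eq_single (f a) (fun b _ hb => by simp [hb]) (by simp), if_pos rfl, ← mul_neg,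
    ← Real.log_inv, inv_div, sum_filter]
  simp_rw [eq_comm (a := f a)]

theorem coarseJointMC_eq_ite {α γ : Type*} [Fintype α] [Fintype γ] (μ : α → ℝ)
    (P : α → α → ℝ) (g : α → γ) (T : ℕ) :
    coarseJointMC μ P g T = fun x y => if y = g ∘ x then markovFD μ P T x else 0 := by
  ext x y
  simp only [coarseJointMC, funext_iff, comp_apply]

theorem mul_le_condEnt2_coarseJointMC {α γ : Type*} [Fintype α] [Fintype γ] {μ : α → ℝ}
    {P : α → α → ℝ} {m : ℝ} (hm : 0 < m) (hμ : ∀ a, μ a ∈ Set.Icc m 1)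
    (hP : ∀ a b, P a b ∈ Set.Icc m 1) (hP1 : ∀ a, ∑ b, P a b = 1) (hμ1 : ∑ a, μ a = 1)
    {g : α → γ} (hg : ¬ Injective g) (T : ℕ) :
    T * (m ^ 2 / Fintype.card α * Real.log (1 + m ^ 2)) ≤ condEnt2 (coarseJointMC μ P g T) := by
  obtain ⟨a, b, hgab, hab⟩ := not_injective_iff.1 hg
  have hm1 : m ≤ 1 := (hμ a).1.trans (hμ a).2
  set F := markovFD μ P T
  have hF : ∀ x, 0 < F x :=
    markovFD_pos (fun a => hm.trans_le (hμ a).1) fun a b => hm.trans_le (hP a b).1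
  have hlog (x : Fin T → α) : #{t | x t = a} * Real.log (1 + m ^ 2)
      ≤ Real.log ((∑ x' with g ∘ x' = g ∘ x, F x') / F x) := by
    rw [← Real.log_pow]
    refine Real.log_le_log (by positivity) ((le_div_iff₀ (hF x)).2 ?_)
    exact pow_mul_markovFD_le_sum_fiber hm.le hm1 hμ hP hab hgab x
  rw [coarseJointMC_eq_ite, condEnt2_ite_eq]
  calc T * (m ^ 2 / Fintype.card α * Real.log (1 + m ^ 2))
      = (∑ _t : Fin T, m ^ 2 / Fintype.card α) * Real.log (1 + m ^ 2) := by simp [mul_assoc]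
    _ ≤ (∑ t : Fin T, ∑ x with x t = a, F x) * Real.log (1 + m ^ 2) := by
        gcongr with t
        exacts [Real.log_nonneg (by nlinarith),
          sq_div_card_le_sum_markovFD hm.le hm1 hμ hP hP1 hμ1 t a]
    _ = ∑ x, F x * (#{t | x t = a} * Real.log (1 + m ^ 2)) := by
        simp_rw [sum_filter]
        rw [sum_comm, sum_mul]
        refine sum_congr rfl fun x _ => ?_
        rw [← sum_filter, sum_const, nsmul_eq_mul]
        ring
    _ ≤ _ := by gcongr with x; exacts [(hF x).le, hlog x]

theorem mem_Icc_of_stationary {α : Type*} [Fintype α] {π : α → ℝ} {P : α → α → ℝ}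
    {m : ℝ} (hπ0 : ∀ i, 0 ≤ π i) (hπ1 : ∑ i, π i = 1) (hinv : ∀ j, ∑ i, π i * P i j = π j)
    (hP : ∀ i j, m ≤ P i j) (j : α) : π j ∈ Set.Icc m 1 := by
  refine ⟨?_, hπ1 ▸ single_le_sum (fun i _ => hπ0 i) (mem_univ j)⟩
  calc m = ∑ i, π i * m := by rw [← sum_mul, hπ1, one_mul]
    _ ≤ π j := hinv j ▸ sum_le_sum fun i _ => mul_le_mul_of_nonneg_left (hP i j) (hπ0 i)

theorem positive_matrix_noninjective_positive_loss_rate_general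
    {α γ : Type*} [Fintype α] [Fintype γ]
    (P : Matrix α α ℝ) (hP0 : ∀ i j, 0 < P i j) (hP1 : ∀ i, ∑ j, P i j = 1)
    (π : α → ℝ) (hπ0 : ∀ i, 0 ≤ π i) (hπ1 : ∑ i, π i = 1)
    (hinv : ∀ j, ∑ i, π i * P i j = π j)
    (g : α → γ) (hg : ¬ Function.Injective g)
    (L : ℝ)
    (hL : Filter.Tendsto
      (fun T : ℕ => condEnt2 (coarseJointMC π (fun a b => P a b) g T) / T)
      Filter.atTop (nhds L)) :
    0 < L := by
  obtain ⟨a, -⟩ := not_injective_iff.1 hg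
  have : Nonempty α := ⟨a⟩
  obtain ⟨⟨i₀, j₀⟩, hmin⟩ := Finite.exists_min fun p : α × α => P p.1 p.2
  set m := P i₀ j₀
  have hm : 0 < m := hP0 i₀ j₀
  have hP : ∀ i j, P i j ∈ Set.Icc m 1 := fun i j =>
    ⟨hmin (i, j), hP1 i ▸ single_le_sum (fun j _ => (hP0 i j).le) (mem_univ j)⟩
  have hπ := mem_Icc_of_stationary hπ0 hπ1 hinv fun i j => (hP i j).1
  have hc : 0 < m ^ 2 / Fintype.card α * Real.log (1 + m ^ 2) := by
    have := Real.log_pos (by nlinarith : 1 < 1 + m ^ 2)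
    positivity
  refine hc.trans_le (ge_of_tendsto hL (Filter.eventually_atTop.2 ⟨1, fun T hT => ?_⟩))
  rw [le_div_iff₀ (by exact_mod_cast hT)]
  linarith [mul_le_condEnt2_coarseJointMC hm hπ hP hP1 hπ1 hg T]

/-- If the transition matrix of a stationary irreducible aperiodic Markov
chain has all entries strictly positive and `g` is non-injective, then the information loss
rate `lim_T H(X_1^T | Y_1^T)/T` of the coarse graining `Y_t = g(X_t)` is strictly positive. -/
theorem positive_matrix_noninjective_positive_loss_rate
    {α γ : Type*} [Fintype α] [DecidableEq α] [Fintype γ]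
    (P : Matrix α α ℝ) (hP0 : ∀ i j, 0 < P i j) (hP1 : ∀ i, ∑ j, P i j = 1)
    (hirr : MCIrreducible P) (hap : MCAperiodic P)
    (π : α → ℝ) (hπ0 : ∀ i, 0 ≤ π i) (hπ1 : ∑ i, π i = 1)
    (hinv : ∀ j, ∑ i, π i * P i j = π j)
    (g : α → γ) (hg : ¬ Function.Injective g)
    (L : ℝ)
    (hL : Filter.Tendsto
      (fun T : ℕ => condEnt2 (coarseJointMC π (fun a b => P a b) g T) / T)
      Filter.atTop (nhds L)) :
    0 < L :=
  positive_matrix_noninjective_positive_loss_rate_general P hP0 hP1 π hπ0 hπ1 hinv g hg L hL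
end

section
/- Let X be a stationary, irreducible, aperiodic Markov chain on a finite state space 𝒳 with transition matrix P and invariant distribution π, let g : 𝒳 → 𝒴 and Y_t = g(X_t), and let Q be the aggregated transition matrix Q_{i,j} = P(Y_2 = j | Y_1 = i). Define the π-lifting P' of Q by P'_{ℓ,m} = ( π_m / Σ_{l ∈ g^{-1}(g(m))} π_l ) · Q_{g(ℓ), g(m)}. Then the Kullback–Leibler divergence rate between X and the lifted chain satisfies Σ_{ℓ,m ∈ 𝒳} π_ℓ P_{ℓ,m} log( P_{ℓ,m} / P'_{ℓ,m} ) = I(X_1; X_2) − I(Y_1; Y_2); consequently, over all coarse grainings g : 𝒳 → [M], minimizing this divergence rate is equivalent to maximizing the mutual information I(Y_1; Y_2). -/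
open Classical

/-- Shannon mutual information `I(A; B)` of a joint PMF `J` on `A × B`. -/
noncomputable def mutInf {A B : Type*} [Fintype A] [Fintype B] (J : A → B → ℝ) : ℝ :=
  ∑ a, ∑ b, J a b * Real.log (J a b / ((∑ b', J a b') * (∑ a', J a' b)))

/-- Aggregated transition matrix `Q_{i,j} = P(Y_2 = j | Y_1 = i)` for `Y_t = g(X_t)`. -/
noncomputable def aggQ {α B : Type*} [Fintype α] (π : α → ℝ) (P : α → α → ℝ)
    (g : α → B) (i j : B) : ℝ :=
  (∑ ℓ, ∑ m, if g ℓ = i ∧ g m = j then π ℓ * P ℓ m else 0) /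
    (∑ ℓ, if g ℓ = i then π ℓ else 0)

/-- The `π`-lifting `P'_{ℓ,m} = (π_m / Σ_{l ∈ g⁻¹(g(m))} π_l) · Q_{g(ℓ), g(m)}`. -/
noncomputable def piLift {α B : Type*} [Fintype α] (π : α → ℝ) (P : α → α → ℝ)
    (g : α → B) (ℓ m : α) : ℝ :=
  (π m / (∑ l, if g l = g m then π l else 0)) * aggQ π P g (g ℓ) (g m)

/-- KL divergence rate `Σ_{ℓ,m} π_ℓ P_{ℓ,m} log(P_{ℓ,m}/P'_{ℓ,m})` between stationary
Markov chains on the same state space. -/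
noncomputable def kldrTo {α : Type*} [Fintype α] (π : α → ℝ) (P P' : α → α → ℝ) : ℝ :=
  ∑ ℓ, ∑ m, π ℓ * P ℓ m * Real.log (P ℓ m / P' ℓ m)

/-- Joint PMF of `(Y_1, Y_2)` for `Y_t = g(X_t)`. -/
noncomputable def jointY {α B : Type*} [Fintype α] (π : α → ℝ) (P : α → α → ℝ)
    (g : α → B) (i j : B) : ℝ :=
  ∑ ℓ, ∑ m, if g ℓ = i ∧ g m = j then π ℓ * P ℓ m else 0

set_option linter.unusedSectionVars false

section Aux
variable {α B : Type*} [Fintype α] [Fintype B]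

lemma collapse_aux (g : α → B) (X : B → B → ℝ) (ℓ m : α) :
    (∑ i, ∑ j, if g ℓ = i ∧ g m = j then X i j else 0) = X (g ℓ) (g m) := by
  simp [ite_and, Finset.sum_ite_eq]

lemma rowY (π : α → ℝ) (P : α → α → ℝ) (hP1 : ∀ i, ∑ j, P i j = 1) (g : α → B) (i : B) :
    ∑ j, jointY π P g i j = ∑ ℓ, if g ℓ = i then π ℓ else 0 := by
  unfold jointY
  rw [Finset.sum_comm]
  refine Finset.sum_congr rfl fun ℓ _ => ?_
  rw [Finset.sum_comm]
  have : ∀ m : α, (∑ j, if g ℓ = i ∧ g m = j then π ℓ * P ℓ m else 0)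
      = if g ℓ = i then π ℓ * P ℓ m else 0 := by
    intro m; simp [ite_and, Finset.sum_ite_eq]
  rw [Finset.sum_congr rfl fun m _ => this m]
  split
  · rw [← Finset.mul_sum, hP1, mul_one]
  · simp

lemma colY (π : α → ℝ) (P : α → α → ℝ) (hinv : ∀ j, ∑ i, π i * P i j = π j)
    (g : α → B) (j : B) :
    ∑ i, jointY π P g i j = ∑ m, if g m = j then π m else 0 := by
  unfold jointY
  rw [Finset.sum_comm]
  rw [show (∑ ℓ, ∑ i, ∑ m, if g ℓ = i ∧ g m = j then π ℓ * P ℓ m else 0)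
      = ∑ ℓ, ∑ m, if g m = j then π ℓ * P ℓ m else 0 from
    Finset.sum_congr rfl fun ℓ _ => by
      rw [Finset.sum_comm]
      refine Finset.sum_congr rfl fun m _ => ?_
      simp [ite_and, Finset.sum_ite_eq]]
  rw [Finset.sum_comm]
  refine Finset.sum_congr rfl fun m _ => ?_
  split
  · exact hinv m ▸ rfl
  · simp

end Aux

section Key
variable {α B : Type*} [Fintype α] [Fintype B]

lemma swap4 (f : B → B → α → α → ℝ) :
    ∑ i, ∑ j, ∑ ℓ, ∑ m, f i j ℓ m = ∑ ℓ, ∑ m, ∑ i, ∑ j, f i j ℓ m := by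
  calc ∑ i, ∑ j, ∑ ℓ, ∑ m, f i j ℓ m
      = ∑ i, ∑ ℓ, ∑ j, ∑ m, f i j ℓ m :=
        Finset.sum_congr rfl fun i _ => Finset.sum_comm
    _ = ∑ ℓ, ∑ i, ∑ j, ∑ m, f i j ℓ m := Finset.sum_comm
    _ = ∑ ℓ, ∑ i, ∑ m, ∑ j, f i j ℓ m :=
        Finset.sum_congr rfl fun ℓ _ => Finset.sum_congr rfl fun i _ => Finset.sum_comm
    _ = ∑ ℓ, ∑ m, ∑ i, ∑ j, f i j ℓ m :=
        Finset.sum_congr rfl fun ℓ _ => Finset.sum_comm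

lemma key_identity (P : α → α → ℝ) (hP0 : ∀ i j, 0 ≤ P i j) (hP1 : ∀ i, ∑ j, P i j = 1)
    (π : α → ℝ) (hπpos : ∀ i, 0 < π i) (hinv : ∀ j, ∑ i, π i * P i j = π j)
    (g : α → B) :
    kldrTo π P (piLift π P g) = mutInf (fun ℓ m => π ℓ * P ℓ m) - mutInf (jointY π P g) := by
  set ρ : B → ℝ := fun i => ∑ l, if g l = i then π l else 0 with hρdef
  set W : B → B → ℝ := jointY π P g with hWdef
  -- positivity facts
  have hρpos : ∀ m : α, 0 < ρ (g m) := by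
    intro m
    refine lt_of_lt_of_le (hπpos m) ?_
    have := Finset.single_le_sum (f := fun l => if g l = g m then π l else 0)
      (fun l _ => by by_cases h : g l = g m <;> simp [h, (hπpos l).le]) (Finset.mem_univ m)
    simpa using this
  have hWge : ∀ ℓ m : α, π ℓ * P ℓ m ≤ W (g ℓ) (g m) := by
    intro ℓ m
    have h1 : ∀ ℓ' : α, 0 ≤ ∑ m', if g ℓ' = g ℓ ∧ g m' = g m then π ℓ' * P ℓ' m' else 0 := by
      intro ℓ'
      refine Finset.sum_nonneg fun m' _ => ?_
      by_cases h : g ℓ' = g ℓ ∧ g m' = g m <;>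
        simp [h, mul_nonneg (hπpos ℓ').le (hP0 ℓ' m')]
    have h2 : π ℓ * P ℓ m ≤ ∑ m', if g ℓ = g ℓ ∧ g m' = g m then π ℓ * P ℓ m' else 0 := by
      have := Finset.single_le_sum
        (f := fun m' => if g ℓ = g ℓ ∧ g m' = g m then π ℓ * P ℓ m' else 0)
        (fun m' _ => by by_cases h : g m' = g m <;>
          simp [h, mul_nonneg (hπpos ℓ).le (hP0 ℓ m')]) (Finset.mem_univ m)
      simpa using this
    refine le_trans h2 ?_
    exact Finset.single_le_sum
      (f := fun ℓ' => ∑ m', if g ℓ' = g ℓ ∧ g m' = g m then π ℓ' * P ℓ' m' else 0)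
      (fun ℓ' _ => h1 ℓ') (Finset.mem_univ ℓ)
  -- mutInf of the joint of X
  have hMX : mutInf (fun ℓ m => π ℓ * P ℓ m)
      = ∑ ℓ, ∑ m, π ℓ * P ℓ m * Real.log (π ℓ * P ℓ m / (π ℓ * π m)) := by
    unfold mutInf
    refine Finset.sum_congr rfl fun ℓ _ => Finset.sum_congr rfl fun m _ => ?_
    rw [← Finset.mul_sum, hP1, mul_one, hinv]
  -- mutInf of Y as sum over ℓ, m
  have hMY : mutInf W = ∑ ℓ, ∑ m, π ℓ * P ℓ m
      * Real.log (W (g ℓ) (g m) / (ρ (g ℓ) * ρ (g m))) := by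
    have step1 : mutInf W = ∑ i, ∑ j, W i j * Real.log (W i j / (ρ i * ρ j)) := by
      unfold mutInf
      refine Finset.sum_congr rfl fun i _ => Finset.sum_congr rfl fun j _ => ?_
      rw [hWdef, rowY π P hP1 g i, colY π P hinv g j]
    rw [step1]
    have step2 : ∀ i j : B, W i j * Real.log (W i j / (ρ i * ρ j))
        = ∑ ℓ, ∑ m, if g ℓ = i ∧ g m = j then
            π ℓ * P ℓ m * Real.log (W (g ℓ) (g m) / (ρ (g ℓ) * ρ (g m))) else 0 := by
      intro i j
      symm
      have hcong : ∀ ℓ m : α,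
          (if g ℓ = i ∧ g m = j then
            π ℓ * P ℓ m * Real.log (W (g ℓ) (g m) / (ρ (g ℓ) * ρ (g m))) else 0)
          = (if g ℓ = i ∧ g m = j then π ℓ * P ℓ m else 0)
              * Real.log (W i j / (ρ i * ρ j)) := by
        intro ℓ m
        by_cases h : g ℓ = i ∧ g m = j
        · rw [if_pos h, if_pos h, h.1, h.2]
        · rw [if_neg h, if_neg h, zero_mul]
      calc ∑ ℓ, ∑ m, (if g ℓ = i ∧ g m = j then
              π ℓ * P ℓ m * Real.log (W (g ℓ) (g m) / (ρ (g ℓ) * ρ (g m))) else 0)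
          = ∑ ℓ, ∑ m, (if g ℓ = i ∧ g m = j then π ℓ * P ℓ m else 0)
              * Real.log (W i j / (ρ i * ρ j)) :=
            Finset.sum_congr rfl fun ℓ _ => Finset.sum_congr rfl fun m _ => hcong ℓ m
        _ = ∑ ℓ, (∑ m, if g ℓ = i ∧ g m = j then π ℓ * P ℓ m else 0)
              * Real.log (W i j / (ρ i * ρ j)) :=
            Finset.sum_congr rfl fun ℓ _ => (Finset.sum_mul _ _ _).symm
        _ = (∑ ℓ, ∑ m, if g ℓ = i ∧ g m = j then π ℓ * P ℓ m else 0)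
              * Real.log (W i j / (ρ i * ρ j)) := (Finset.sum_mul _ _ _).symm
        _ = W i j * Real.log (W i j / (ρ i * ρ j)) := rfl
    rw [Finset.sum_congr rfl fun i _ => Finset.sum_congr rfl fun j _ => step2 i j]
    rw [swap4]
    refine Finset.sum_congr rfl fun ℓ _ => Finset.sum_congr rfl fun m _ => ?_
    exact collapse_aux g
      (fun _ _ => π ℓ * P ℓ m * Real.log (W (g ℓ) (g m) / (ρ (g ℓ) * ρ (g m)))) ℓ m
  rw [hMX, hMY, ← Finset.sum_sub_distrib]
  unfold kldrTo
  refine Finset.sum_congr rfl fun ℓ _ => ?_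
  rw [← Finset.sum_sub_distrib]
  refine Finset.sum_congr rfl fun m _ => ?_
  rcases eq_or_lt_of_le (hP0 ℓ m) with h | h
  · simp [← h]
  · have hπℓ := hπpos ℓ
    have hπm := hπpos m
    have hρℓ := hρpos ℓ
    have hρm := hρpos m
    have hW : 0 < W (g ℓ) (g m) := lt_of_lt_of_le (mul_pos hπℓ h) (hWge ℓ m)
    have hPL : piLift π P g ℓ m = π m * W (g ℓ) (g m) / (ρ (g m) * ρ (g ℓ)) := by
      show (π m / ρ (g m)) * (W (g ℓ) (g m) / ρ (g ℓ)) = _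
      rw [div_mul_div_comm]
    have hX : (0:ℝ) < π m * W (g ℓ) (g m) / (ρ (g m) * ρ (g ℓ)) :=
      div_pos (mul_pos hπm hW) (mul_pos hρm hρℓ)
    rw [hPL, ← mul_sub]
    congr 1
    rw [Real.log_div h.ne' hX.ne',
        Real.log_div (mul_pos hπm hW).ne' (mul_pos hρm hρℓ).ne',
        Real.log_mul hπm.ne' hW.ne', Real.log_mul hρm.ne' hρℓ.ne',
        Real.log_div (mul_pos hπℓ h).ne' (mul_pos hπℓ hπm).ne',
        Real.log_mul hπℓ.ne' h.ne', Real.log_mul hπℓ.ne' hπm.ne',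
        Real.log_div hW.ne' (mul_pos hρℓ hρm).ne', Real.log_mul hρℓ.ne' hρm.ne']
    ring

end Key

lemma pow_entry_nonneg {α : Type*} [Fintype α] [DecidableEq α] (P : Matrix α α ℝ)
    (hP0 : ∀ i j, 0 ≤ P i j) : ∀ n i j, 0 ≤ (P ^ n) i j := by
  intro n
  induction n with
  | zero => intro i j; rw [pow_zero]; rw [Matrix.one_apply]; split <;> norm_num
  | succ n ih =>
    intro i j
    rw [pow_succ, Matrix.mul_apply]
    exact Finset.sum_nonneg fun k _ => mul_nonneg (ih i k) (hP0 k j)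

lemma invPowSum {α : Type*} [Fintype α] [DecidableEq α] (P : Matrix α α ℝ)
    (π : α → ℝ) (hinv : ∀ j, ∑ i, π i * P i j = π j) :
    ∀ n j, ∑ i, π i * (P ^ n) i j = π j := by
  intro n
  induction n with
  | zero => intro j; simp [Matrix.one_apply, Finset.sum_ite_eq]
  | succ n ih =>
    intro j
    have : ∀ i, π i * (P ^ (n+1)) i j = ∑ k, π i * ((P ^ n) i k * P k j) := by
      intro i; rw [pow_succ, Matrix.mul_apply, Finset.mul_sum]
    rw [Finset.sum_congr rfl fun i _ => this i, Finset.sum_comm]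
    have : ∀ k, (∑ i, π i * ((P ^ n) i k * P k j)) = π k * P k j := by
      intro k
      calc (∑ i, π i * ((P ^ n) i k * P k j)) = (∑ i, π i * (P ^ n) i k) * P k j := by
            rw [Finset.sum_mul]; exact Finset.sum_congr rfl fun i _ => by ring
        _ = π k * P k j := by rw [ih]
    rw [Finset.sum_congr rfl fun k _ => this k, hinv]

lemma pi_pos {α : Type*} [Fintype α] [DecidableEq α] (P : Matrix α α ℝ)
    (hP0 : ∀ i j, 0 ≤ P i j) (hirr : ∀ i j, ∃ n : ℕ, 0 < n ∧ 0 < (P ^ n) i j)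
    (π : α → ℝ) (hπ0 : ∀ i, 0 ≤ π i) (hπ1 : ∑ i, π i = 1)
    (hinv : ∀ j, ∑ i, π i * P i j = π j) : ∀ j, 0 < π j := by
  obtain ⟨i0, hi0⟩ : ∃ i, 0 < π i := by
    by_contra hc
    push_neg at hc
    have : (∑ i, π i) ≤ 0 := Finset.sum_nonpos fun i _ => hc i
    rw [hπ1] at this; linarith
  intro j
  obtain ⟨n, -, hn⟩ := hirr i0 j
  have h1 : π i0 * (P ^ n) i0 j ≤ ∑ i, π i * (P ^ n) i j :=
    Finset.single_le_sum
      (fun i _ => mul_nonneg (hπ0 i) (pow_entry_nonneg P hP0 n i j)) (Finset.mem_univ i0)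
  rw [invPowSum P π hinv] at h1
  exact lt_of_lt_of_le (mul_pos hi0 hn) h1


set_option maxHeartbeats 1000000 in
/-- The KL divergence rate between a stationary irreducible aperiodic
Markov chain and the `π`-lifting of its aggregation equals `I(X_1;X_2) − I(Y_1;Y_2)`;
consequently, over coarse grainings `g : 𝒳 → [M]`, minimizing this divergence rate is
equivalent to maximizing `I(Y_1;Y_2)`. -/
theorem pi_lifting_KLDR_identity
    {α B : Type*} [Fintype α] [DecidableEq α] [Fintype B]
    (P : Matrix α α ℝ) (hP0 : ∀ i j, 0 ≤ P i j) (hP1 : ∀ i, ∑ j, P i j = 1)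
    (hirr : MCIrreducible P) (hap : MCAperiodic P)
    (π : α → ℝ) (hπ0 : ∀ i, 0 ≤ π i) (hπ1 : ∑ i, π i = 1)
    (hinv : ∀ j, ∑ i, π i * P i j = π j)
    (g : α → B) :
    (kldrTo π (fun a b => P a b) (piLift π (fun a b => P a b) g)
        = mutInf (fun ℓ m => π ℓ * P ℓ m) - mutInf (jointY π (fun a b => P a b) g)) ∧
    (∀ (M : ℕ) (g₁ g₂ : α → Fin M),
        kldrTo π (fun a b => P a b) (piLift π (fun a b => P a b) g₁)
            ≤ kldrTo π (fun a b => P a b) (piLift π (fun a b => P a b) g₂)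
          ↔ mutInf (jointY π (fun a b => P a b) g₂)
            ≤ mutInf (jointY π (fun a b => P a b) g₁)) := by

  have hπpos : ∀ i, 0 < π i := pi_pos P hP0 hirr π hπ0 hπ1 hinv
  constructor
  · exact key_identity (fun a b => P a b) hP0 hP1 π hπpos hinv g
  · intro M g₁ g₂
    rw [key_identity (fun a b => P a b) hP0 hP1 π hπpos hinv g₁,
        key_identity (fun a b => P a b) hP0 hP1 π hπpos hinv g₂,
        sub_le_sub_iff_left]
end

section
/- Let X be a stationary, irreducible, aperiodic Markov chain on a finite state space 𝒳 with transition matrix P and invariant distribution π, let g : 𝒳 → 𝒴 and Y_t = g(X_t), and let Q be the aggregated transition matrix Q_{i,j} = P(Y_2 = j | Y_1 = i). Define the P-dependent lifting P' of Q by P'_{ℓ,m} = ( P_{ℓ,m} / Σ_{k ∈ g^{-1}(g(m))} P_{ℓ,k} ) · Q_{g(ℓ), g(m)} when Σ_{k ∈ g^{-1}(g(m))} P_{ℓ,k} > 0, and P'_{ℓ,m} = Q_{g(ℓ),g(m)} / |g^{-1}(g(m))| otherwise. Then Σ_{ℓ,m ∈ 𝒳} π_ℓ P_{ℓ,m} log(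 P_{ℓ,m} / P'_{ℓ,m} ) = H(Y_2 | Y_1) − H(Y_2 | X_1). -/
open Classical

/-- The `P`-dependent lifting of `Q`. -/
noncomputable def pLift {α B : Type*} [Fintype α] (π : α → ℝ) (P : α → α → ℝ)
    (g : α → B) (ℓ m : α) : ℝ :=
  if 0 < ∑ k, (if g k = g m then P ℓ k else 0) then
    (P ℓ m / ∑ k, (if g k = g m then P ℓ k else 0)) * aggQ π P g (g ℓ) (g m)
  else
    aggQ π P g (g ℓ) (g m) / ((Finset.univ.filter fun k => g k = g m).card : ℝ)

section helpers
variable {α β : Type*} [Fintype α] [Fintype β] [DecidableEq β]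

/-- 4-fold sum swap + collapse over fibers of `g`. -/
lemma fiber_collapse (g : α → β) (T : α → α → ℝ) :
    ∑ j : β, ∑ i : β, ∑ ℓ : α, ∑ m : α, (if g ℓ = i ∧ g m = j then T ℓ m else 0)
      = ∑ ℓ, ∑ m, T ℓ m := by
  calc ∑ j : β, ∑ i : β, ∑ ℓ : α, ∑ m : α, (if g ℓ = i ∧ g m = j then T ℓ m else 0)
      = ∑ j : β, ∑ ℓ : α, ∑ i : β, ∑ m : α, (if g ℓ = i ∧ g m = j then T ℓ m else 0) :=
        Finset.sum_congr rfl fun j _ => Finset.sum_comm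
    _ = ∑ j : β, ∑ ℓ : α, ∑ m : α, ∑ i : β, (if g ℓ = i ∧ g m = j then T ℓ m else 0) :=
        Finset.sum_congr rfl fun j _ => Finset.sum_congr rfl fun ℓ _ => Finset.sum_comm
    _ = ∑ ℓ : α, ∑ j : β, ∑ m : α, ∑ i : β, (if g ℓ = i ∧ g m = j then T ℓ m else 0) :=
        Finset.sum_comm
    _ = ∑ ℓ : α, ∑ m : α, ∑ j : β, ∑ i : β, (if g ℓ = i ∧ g m = j then T ℓ m else 0) :=
        Finset.sum_congr rfl fun ℓ _ => Finset.sum_comm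
    _ = ∑ ℓ, ∑ m, T ℓ m := by
        simp [ite_and, Finset.sum_ite_eq]

/-- single-index fiber collapse. -/
lemma fiber_collapse1 (g : α → β) (T : α → ℝ) :
    ∑ j : β, ∑ m : α, (if g m = j then T m else 0) = ∑ m, T m := by
  rw [Finset.sum_comm]
  simp [Finset.sum_ite_eq]

end helpers

/-- The KL divergence rate between a stationary irreducible aperiodic
Markov chain and the `P`-dependent lifting of its aggregation equals
`H(Y_2|Y_1) − H(Y_2|X_1)`. -/
theorem p_lifting_KLDR_identity
    {α B : Type*} [Fintype α] [DecidableEq α] [Fintype B]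
    (P : Matrix α α ℝ) (hP0 : ∀ i j, 0 ≤ P i j) (hP1 : ∀ i, ∑ j, P i j = 1)
    (hirr : MCIrreducible P) (hap : MCAperiodic P)
    (π : α → ℝ) (hπ0 : ∀ i, 0 ≤ π i) (hπ1 : ∑ i, π i = 1)
    (hinv : ∀ j, ∑ i, π i * P i j = π j)
    (g : α → B) :
    kldrTo π (fun a b => P a b) (pLift π (fun a b => P a b) g)
      = condEnt2 (fun (j : B) (i : B) => jointY π (fun a b => P a b) g i j)
        - condEnt2 (fun (j : B) (ℓ : α) => π ℓ * ∑ m, if g m = j then P ℓ m else 0) := by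
  classical
  -- abbreviations (as plain terms)
  set tA : ℝ := ∑ ℓ, ∑ m, π ℓ * P ℓ m *
      Real.log (∑ k, if g k = g m then P ℓ k else 0) with htA
  set tB : ℝ := ∑ ℓ, ∑ m, π ℓ * P ℓ m *
      Real.log (aggQ π (fun a b => P a b) g (g ℓ) (g m)) with htB
  -- Q positivity where π ℓ * P ℓ m > 0
  have hQpos : ∀ ℓ m, 0 < π ℓ → 0 < P ℓ m →
      0 < aggQ π (fun a b => P a b) g (g ℓ) (g m) := by
    intro ℓ m hπ hp
    unfold aggQ
    apply div_pos
    · apply Finset.sum_pos'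
      · intro ℓ' _
        apply Finset.sum_nonneg
        intro m' _
        split
        · exact mul_nonneg (hπ0 _) (hP0 _ _)
        · exact le_rfl
      · refine ⟨ℓ, Finset.mem_univ ℓ, Finset.sum_pos' (fun m' _ => ?_) ⟨m, Finset.mem_univ m, ?_⟩⟩
        · split
          · exact mul_nonneg (hπ0 _) (hP0 _ _)
          · exact le_rfl
        · simpa using mul_pos hπ hp
    · exact Finset.sum_pos' (fun ℓ' _ => by split <;> [exact hπ0 _; exact le_rfl])
        ⟨ℓ, Finset.mem_univ ℓ, by simpa using hπ⟩
  -- Step 1: the KL divergence rate equals tA - tB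
  have hK : kldrTo π (fun a b => P a b) (pLift π (fun a b => P a b) g) = tA - tB := by
    rw [htA, htB, ← Finset.sum_sub_distrib]
    unfold kldrTo
    refine Finset.sum_congr rfl fun ℓ _ => ?_
    rw [← Finset.sum_sub_distrib]
    refine Finset.sum_congr rfl fun m _ => ?_
    by_cases hπ : π ℓ = 0
    · simp [hπ]
    by_cases hp : P ℓ m = 0
    · simp [hp]
    have hπp : 0 < π ℓ := (hπ0 ℓ).lt_of_ne (Ne.symm hπ)
    have hpp : 0 < P ℓ m := (hP0 ℓ m).lt_of_ne (Ne.symm hp)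
    have hSp : 0 < ∑ k, (if g k = g m then P ℓ k else 0) :=
      Finset.sum_pos' (fun k _ => by split <;> [exact hP0 _ _; exact le_rfl])
        ⟨m, Finset.mem_univ m, by simpa using hpp⟩
    have hQp := hQpos ℓ m hπp hpp
    simp only [pLift]
    rw [if_pos hSp]
    have hdiv : P ℓ m / ((P ℓ m / ∑ k, (if g k = g m then P ℓ k else 0)) *
        aggQ π (fun a b => P a b) g (g ℓ) (g m))
        = (∑ k, (if g k = g m then P ℓ k else 0)) /
            aggQ π (fun a b => P a b) g (g ℓ) (g m) := by
      field_simp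
    rw [hdiv, Real.log_div hSp.ne' hQp.ne']
    ring
  -- marginal of jointY
  have hmarg : ∀ i : B, (∑ j' : B, jointY π (fun a b => P a b) g i j')
      = ∑ ℓ, if g ℓ = i then π ℓ else 0 := by
    intro i
    simp only [jointY]
    rw [Finset.sum_comm]
    refine Finset.sum_congr rfl fun ℓ _ => ?_
    rw [Finset.sum_comm]
    by_cases h : g ℓ = i
    · simp [h, ite_and, Finset.sum_ite_eq, ← Finset.mul_sum, hP1]
    · simp [h, ite_and]
  -- Step 2: condEnt2 of the Y-joint equals -tB
  have h1 : condEnt2 (fun (j : B) (i : B) => jointY π (fun a b => P a b) g i j) = -tB := by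
    simp only [condEnt2, neg_inj, htB]
    calc ∑ j : B, ∑ i : B, jointY π (fun a b => P a b) g i j *
          Real.log (jointY π (fun a b => P a b) g i j /
            ∑ j' : B, jointY π (fun a b => P a b) g i j')
        = ∑ j : B, ∑ i : B, jointY π (fun a b => P a b) g i j *
            Real.log (aggQ π (fun a b => P a b) g i j) := by
          refine Finset.sum_congr rfl fun j _ => Finset.sum_congr rfl fun i _ => ?_
          rw [hmarg i]
          rfl
      _ = ∑ j : B, ∑ i : B, ∑ ℓ, ∑ m, (if g ℓ = i ∧ g m = j then
            π ℓ * P ℓ m * Real.log (aggQ π (fun a b => P a b) g (g ℓ) (g m)) else 0) := by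
          refine Finset.sum_congr rfl fun j _ => Finset.sum_congr rfl fun i _ => ?_
          simp only [jointY, Finset.sum_mul]
          refine Finset.sum_congr rfl fun ℓ _ => Finset.sum_congr rfl fun m _ => ?_
          split_ifs with h
          · rw [h.1, h.2]
          · rw [zero_mul]
      _ = ∑ ℓ, ∑ m, π ℓ * P ℓ m *
            Real.log (aggQ π (fun a b => P a b) g (g ℓ) (g m)) :=
          fiber_collapse g _
  -- Step 3: condEnt2 of the (X1,Y2)-joint equals -tA
  have h2 : condEnt2 (fun (j : B) (ℓ : α) => π ℓ * ∑ m, if g m = j then P ℓ m else 0) = -tA := by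
    simp only [condEnt2, neg_inj, htA]
    have hmarg2 : ∀ ℓ, (∑ j' : B, π ℓ * ∑ m, if g m = j' then P ℓ m else 0) = π ℓ := by
      intro ℓ
      rw [← Finset.mul_sum, fiber_collapse1 g, hP1, mul_one]
    calc ∑ j : B, ∑ ℓ, (π ℓ * ∑ m, if g m = j then P ℓ m else 0) *
          Real.log ((π ℓ * ∑ m, if g m = j then P ℓ m else 0) /
            ∑ j' : B, π ℓ * ∑ m, if g m = j' then P ℓ m else 0)
        = ∑ j : B, ∑ ℓ, π ℓ * ((∑ m, if g m = j then P ℓ m else 0) *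
            Real.log (∑ m, if g m = j then P ℓ m else 0)) := by
          refine Finset.sum_congr rfl fun j _ => Finset.sum_congr rfl fun ℓ _ => ?_
          rw [hmarg2 ℓ]
          by_cases hπ : π ℓ = 0
          · simp [hπ]
          · have hc : π ℓ * (∑ m, if g m = j then P ℓ m else 0) / π ℓ
                = ∑ m, if g m = j then P ℓ m else 0 := by
              field_simp
            rw [hc]
            ring
      _ = ∑ ℓ, ∑ j : B, π ℓ * ((∑ m, if g m = j then P ℓ m else 0) *
            Real.log (∑ m, if g m = j then P ℓ m else 0)) := Finset.sum_comm
      _ = ∑ ℓ, ∑ m, π ℓ * P ℓ m * Real.log (∑ k, if g k = g m then P ℓ k else 0) := by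
          refine Finset.sum_congr rfl fun ℓ _ => ?_
          calc ∑ j : B, π ℓ * ((∑ m, if g m = j then P ℓ m else 0) *
                Real.log (∑ m, if g m = j then P ℓ m else 0))
              = ∑ j : B, ∑ m, (if g m = j then
                  π ℓ * (P ℓ m * Real.log (∑ k, if g k = g m then P ℓ k else 0)) else 0) := by
                refine Finset.sum_congr rfl fun j _ => ?_
                rw [Finset.sum_mul, Finset.mul_sum]
                refine Finset.sum_congr rfl fun m _ => ?_
                split_ifs with h
                · rw [← h]
                · ring
            _ = ∑ m, π ℓ * (P ℓ m * Real.log (∑ k, if g k = g m then P ℓ k else 0)) :=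
                fiber_collapse1 g _
            _ = ∑ m, π ℓ * P ℓ m * Real.log (∑ k, if g k = g m then P ℓ k else 0) := by
                refine Finset.sum_congr rfl fun m _ => by ring
  rw [hK, h1, h2]
  ring
end

section
/- Let (O, X) be jointly distributed random variables on finite alphabets 𝒪 and 𝒳, and let M ∈ ℕ. Consider the maximization of I(O; Y) over all conditional distributions p_{Y|X} from 𝒳 to the alphabet [M], where Y is generated from X through p_{Y|X} so that O — X — Y form a Markov chain. Then the maximum is attained by a deterministic mapping, i.e., there exists a function g : 𝒳 → [M] such that Y = g(X) achieves I(O; g(X)) ≥ I(O; Y') for every Y' obtained from X via any conditional distribution p_{Y'|X} with alphabet [M]. -/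
/-!
Sampling a channel `c` independently at every input writes it as a mixture of deterministic
channels, the function `f : X → [M]` having weight `∏ x, c x (f x)`. Mixing channels mixes the
joint laws of `(O, Y)` while keeping the law of `O` fixed, and for such mixtures mutual information
is convex (the log-sum inequality, applied entrywise). So `I(O; Y)` is at most an average of the
values at deterministic channels, hence at most their maximum.
-/

open Classical

open Finset Real

theorem sub_le_mul_log_div {a c : ℝ} (ha : 0 ≤ a) (hc : 0 < c) : a - c ≤ a * log (a / c) :=
  calc a - c = c * (a / c - 1) := by field_simp
    _ ≤ c * (a / c * log (a / c)) :=
        mul_le_mul_of_nonneg_left (self_sub_one_le_mul_log (div_nonneg ha hc.le)) hc.le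
    _ = a * log (a / c) := by rw [← mul_assoc, mul_div_cancel₀ a hc.ne']

/-- The log-sum inequality. -/
theorem sum_mul_log_div_sum_le {ι : Type*} (s : Finset ι) (a b : ι → ℝ)
    (ha : ∀ i ∈ s, 0 ≤ a i) (hb : ∀ i ∈ s, 0 ≤ b i) (hab : ∀ i ∈ s, b i = 0 → a i = 0) :
    (∑ i ∈ s, a i) * log ((∑ i ∈ s, a i) / ∑ i ∈ s, b i) ≤ ∑ i ∈ s, a i * log (a i / b i) := by
  set A := ∑ i ∈ s, a i
  set B := ∑ i ∈ s, b i
  rcases (sum_nonneg ha).eq_or_lt with hA | hA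
  · have ha0 : ∀ i ∈ s, a i = 0 := (sum_eq_zero_iff_of_nonneg ha).1 hA.symm
    rw [show A = 0 from hA.symm, zero_mul]
    exact (sum_eq_zero fun i hi => by rw [ha0 i hi, zero_mul]).ge
  obtain ⟨j, hj, haj⟩ := exists_lt_of_sum_lt (by simpa using hA : ∑ i ∈ s, (0 : ℝ) < A)
  have hB : 0 < B :=
    ((hb j hj).lt_of_ne fun h => haj.ne' (hab j hj h.symm)).trans_le (single_le_sum hb hj)
  set r := A / B
  have hr : 0 < r := div_pos hA hB
  -- Tangent-line bound at the ratio `r`: summing it over `i` makes the linear terms cancel.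
  have tangent : ∀ i ∈ s, a i * log r + (a i - b i * r) ≤ a i * log (a i / b i) := by
    intro i hi
    rcases (hb i hi).eq_or_lt with hbi | hbi
    · simp [hab i hi hbi.symm, ← hbi]
    rcases (ha i hi).eq_or_lt with hai | hai
    · rw [← hai]; simpa using mul_nonneg hbi.le hr.le
    have := sub_le_mul_log_div hai.le (mul_pos hbi hr)
    rw [← div_div, log_div (div_pos hai hbi).ne' hr.ne'] at this
    linarith
  calc A * log r = ∑ i ∈ s, (a i * log r + (a i - b i * r)) := by
        rw [sum_add_distrib, sum_sub_distrib, ← sum_mul, ← sum_mul, mul_div_cancel₀ A hB.ne']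
        ring
    _ ≤ ∑ i ∈ s, a i * log (a i / b i) := sum_le_sum tangent

theorem mutInf_eq_of_sum_eq {O Y : Type*} [Fintype O] [Fintype Y] {J : O → Y → ℝ} {pO : O → ℝ}
    (hm : ∀ o, ∑ y, J o y = pO o) :
    mutInf J = ∑ o, ∑ y, J o y * log (J o y / (pO o * ∑ o', J o' y)) := by
  simp only [mutInf, hm]

/-- The log-sum inequality at one entry `(o, y)` of a mixture of joint laws: `j i = J i o y`, `P` is
the common row marginal at `o` and `q i` the column marginal of `J i` at `y`. -/
theorem mixture_mul_log_le {ι : Type*} [Fintype ι] {w j q : ι → ℝ} {P : ℝ} (hw : ∀ i, 0 ≤ w i)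
    (hj : ∀ i, 0 ≤ j i) (hjP : ∀ i, j i ≤ P) (hjq : ∀ i, j i ≤ q i) :
    (∑ i, w i * j i) * log ((∑ i, w i * j i) / (P * ∑ i, w i * q i))
      ≤ ∑ i, w i * (j i * log (j i / (P * q i))) := by
  have hPq : ∀ i, 0 ≤ P * q i := fun i => mul_nonneg ((hj i).trans (hjP i)) ((hj i).trans (hjq i))
  have hj0 : ∀ i, P * q i = 0 → j i = 0 := by
    intro i h
    rcases mul_eq_zero.1 h with h | h
    · exact ((hjP i).trans h.le).antisymm (hj i)
    · exact ((hjq i).trans h.le).antisymm (hj i)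
  have key := sum_mul_log_div_sum_le univ (fun i => w i * j i) (fun i => w i * (P * q i))
    (fun i _ => mul_nonneg (hw i) (hj i)) (fun i _ => mul_nonneg (hw i) (hPq i))
    (fun i _ h => by
      rcases mul_eq_zero.1 h with h | h
      · simp [h]
      · simp [hj0 i h])
  have hb : ∑ i, w i * (P * q i) = P * ∑ i, w i * q i := by
    simp only [mul_left_comm (w _) P, ← mul_sum]
  rw [hb] at key
  refine key.trans_eq (sum_congr rfl fun i _ => ?_)
  rcases (hw i).eq_or_lt with hwi | hwi
  · simp [← hwi]
  · rw [mul_div_mul_left _ _ hwi.ne', mul_assoc]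

theorem mutInf_mixture_le {ι O Y : Type*} [Fintype ι] [Fintype O] [Fintype Y]
    {w : ι → ℝ} (hw : ∀ i, 0 ≤ w i) (hw1 : ∑ i, w i = 1)
    {J : ι → O → Y → ℝ} (hJ : ∀ i o y, 0 ≤ J i o y)
    {pO : O → ℝ} (hm : ∀ i o, ∑ y, J i o y = pO o) :
    mutInf (fun o y => ∑ i, w i * J i o y) ≤ ∑ i, w i * mutInf (J i) := by
  have hrow : ∀ o, ∑ y, ∑ i, w i * J i o y = pO o := fun o => by
    rw [sum_comm]
    simp only [← mul_sum, hm, ← sum_mul, hw1, one_mul]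
  have hcol : ∀ y, ∑ o, ∑ i, w i * J i o y = ∑ i, w i * ∑ o, J i o y := fun y => by
    rw [sum_comm]
    simp only [mul_sum]
  calc mutInf (fun o y => ∑ i, w i * J i o y)
      = ∑ o, ∑ y, (∑ i, w i * J i o y) *
          log ((∑ i, w i * J i o y) / (pO o * ∑ i, w i * ∑ o', J i o' y)) := by
        simp only [mutInf_eq_of_sum_eq hrow, hcol]
    _ ≤ ∑ o, ∑ y, ∑ i, w i * (J i o y * log (J i o y / (pO o * ∑ o', J i o' y))) :=
        sum_le_sum fun o _ => sum_le_sum fun y _ => mixture_mul_log_le hw (fun i => hJ i o y)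
          (fun i => hm i o ▸ single_le_sum (fun y' _ => hJ i o y') (mem_univ y))
          (fun i => single_le_sum (fun o' _ => hJ i o' y) (mem_univ o))
    _ = ∑ i, w i * mutInf (J i) := by
        simp only [mutInf_eq_of_sum_eq (hm _), mul_sum]
        exact (sum_congr rfl fun o _ => sum_comm).trans sum_comm

section Channel

variable {X Y : Type*}

def deterministicChannel [DecidableEq Y] (f : X → Y) (x : X) (y : Y) : ℝ :=
  if f x = y then 1 else 0

/-- The probability of drawing the function `f` when the channel `c` is sampled independently at
every input. -/
def productWeight [Fintype X] (c : X → Y → ℝ) (f : X → Y) : ℝ :=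
  ∏ x, c x (f x)

theorem deterministicChannel_nonneg [DecidableEq Y] (f : X → Y) (x : X) (y : Y) :
    0 ≤ deterministicChannel f x y := by
  unfold deterministicChannel
  split_ifs <;> norm_num

theorem sum_deterministicChannel [Fintype Y] [DecidableEq Y] (f : X → Y) (x : X) :
    ∑ y, deterministicChannel f x y = 1 := by
  simp [deterministicChannel]

theorem productWeight_nonneg [Fintype X] {c : X → Y → ℝ} (hc : ∀ x y, 0 ≤ c x y) (f : X → Y) :
    0 ≤ productWeight c f :=
  prod_nonneg fun x _ => hc x (f x)

theorem sum_productWeight [Fintype X] [DecidableEq X] [Fintype Y] {c : X → Y → ℝ}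
    (hc1 : ∀ x, ∑ y, c x y = 1) : ∑ f, productWeight c f = 1 := by
  simp only [productWeight, ← Fintype.prod_sum, hc1, prod_const_one]

theorem sum_productWeight_mul_deterministicChannel [Fintype X] [DecidableEq X] [Fintype Y]
    [DecidableEq Y] {c : X → Y → ℝ} (hc1 : ∀ x, ∑ y, c x y = 1) (x : X) (y : Y) :
    ∑ f, productWeight c f * deterministicChannel f x y = c x y := by
  -- The constraint `f x = y` only modifies the factor at `x` of the product of sums.
  let h : X → Y → ℝ := fun x' z => c x' z * if x' = x then deterministicChannel id z y else 1
  calc ∑ f, productWeight c f * deterministicChannel f x y = ∑ f : X → Y, ∏ x', h x' (f x') := by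
        simp only [h, prod_mul_distrib, prod_ite_eq', mem_univ, if_true, productWeight,
          deterministicChannel, id]
    _ = ∏ x', ∑ z, h x' z := (Fintype.prod_sum h).symm
    _ = c x y := by
        have hrow : ∀ x', ∑ z, h x' z = if x' = x then c x y else 1 := fun x' => by
          by_cases hx' : x' = x <;> simp [h, hx', deterministicChannel, hc1]
        simp only [hrow, prod_ite_eq', mem_univ, if_true]

theorem sum_sum_mul_channel [Fintype X] [Fintype Y] {O : Type*} (p : O → X → ℝ)
    {c : X → Y → ℝ} (hc1 : ∀ x, ∑ y, c x y = 1) (o : O) :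
    ∑ y, ∑ x, p o x * c x y = ∑ x, p o x := by
  rw [sum_comm]
  simp only [← mul_sum, hc1, mul_one]

theorem sum_mul_channel_eq_sum_productWeight [Fintype X] [DecidableEq X] [Fintype Y]
    [DecidableEq Y] {O : Type*} (p : O → X → ℝ) {c : X → Y → ℝ} (hc1 : ∀ x, ∑ y, c x y = 1)
    (o : O) (y : Y) :
    ∑ x, p o x * c x y = ∑ f, productWeight c f * ∑ x, p o x * deterministicChannel f x y := by
  simp only [mul_sum]
  rw [sum_comm]
  refine sum_congr rfl fun x _ => ?_
  rw [← sum_productWeight_mul_deterministicChannel hc1 x y, mul_sum]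
  exact sum_congr rfl fun f _ => mul_left_comm _ _ _

end Channel

theorem deterministic_channel_maximizes_mutual_information_general
    {O X : Type*} [Fintype O] [Fintype X]
    (M : ℕ) (hM : 0 < M)
    (p : O → X → ℝ) (hp : ∀ o x, 0 ≤ p o x) :
    ∃ g : X → Fin M,
      ∀ c : X → Fin M → ℝ, (∀ x y, 0 ≤ c x y) → (∀ x, ∑ y, c x y = 1) →
        mutInf (fun (o : O) (y : Fin M) => ∑ x, p o x * c x y)
          ≤ mutInf (fun (o : O) (y : Fin M) =>
              ∑ x, p o x * (if g x = y then 1 else 0)) := by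
  have : Nonempty (Fin M) := ⟨⟨0, hM⟩⟩
  let J : (X → Fin M) → O → Fin M → ℝ := fun f o y => ∑ x, p o x * deterministicChannel f x y
  obtain ⟨g, hg⟩ := Finite.exists_max fun f => mutInf (J f)
  refine ⟨g, fun c hc hc1 => ?_⟩
  have hJ : ∀ f o y, 0 ≤ J f o y := fun f o y =>
    sum_nonneg fun x _ => mul_nonneg (hp o x) (deterministicChannel_nonneg f x y)
  calc mutInf (fun o y => ∑ x, p o x * c x y)
      = mutInf (fun o y => ∑ f, productWeight c f * J f o y) := by
        simp only [J, sum_mul_channel_eq_sum_productWeight p hc1]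
    _ ≤ ∑ f, productWeight c f * mutInf (J f) :=
        mutInf_mixture_le (productWeight_nonneg hc) (sum_productWeight hc1) hJ
          fun f => sum_sum_mul_channel p (sum_deterministicChannel f)
    _ ≤ ∑ f, productWeight c f * mutInf (J g) :=
        sum_le_sum fun f _ => mul_le_mul_of_nonneg_left (hg f) (productWeight_nonneg hc f)
    _ = mutInf (J g) := by rw [← sum_mul, sum_productWeight hc1, one_mul]

/-- For jointly distributed `(O, X)` on finite alphabets and `M ≥ 1`, the
maximum of `I(O; Y)` over all channels `p_{Y|X}` from `𝒳` to `[M]` (so that `O — X — Y` is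
a Markov chain) is attained by a deterministic mapping `g : 𝒳 → [M]`. -/
theorem deterministic_channel_maximizes_mutual_information
    {O X : Type*} [Fintype O] [Fintype X]
    (M : ℕ) (hM : 0 < M)
    (p : O → X → ℝ) (hp : ∀ o x, 0 ≤ p o x) (hps : ∑ o, ∑ x, p o x = 1) :
    ∃ g : X → Fin M,
      ∀ c : X → Fin M → ℝ, (∀ x y, 0 ≤ c x y) → (∀ x, ∑ y, c x y = 1) →
        mutInf (fun (o : O) (y : Fin M) => ∑ x, p o x * c x y)
          ≤ mutInf (fun (o : O) (y : Fin M) =>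
              ∑ x, p o x * (if g x = y then 1 else 0)) :=
  deterministic_channel_maximizes_mutual_information_general M hM p hp
end
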